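/- arXiv:1603.09077 — 7 statements merged into one kernel-verified Lean document; each statement's English description precedes it below -/
import Mathlib

section
/- Let x ∈ Δ and let i ≥ 1 be an integer. Then P(Y(i,x) = i) = x_0^i + Σ_{k=1}^{i} C(i,k) · x_0^{i-k} · Σ_{r_1,…,r_k ≥ 1 pairwise distinct} x_{r_1} ⋯ x_{r_k}, where the inner sum is over ordered k-tuples of pairwise distinct positive integers. Equivalently, P(Y(i,x) < i) = 1 − x_0^i − Σ_{k=1}^{i} C(i,k) x_0^{i-k} Σ_{r_1,…,r_k distinct} x_{r_1} ⋯ x_{r_k}. -/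
open MeasureTheory ProbabilityTheory

/-- `x` belongs to the infinite simplex `Δ`: the relevant coordinates are `x 1, x 2, …`,
which are nonnegative, nonincreasing, summable with sum `|x| ≤ 1` (the value `x 0` is
irrelevant). -/
def MemDelta (x : ℕ → ℝ) : Prop :=
  (∀ r : ℕ, 1 ≤ r → 0 ≤ x r) ∧ (∀ r : ℕ, 1 ≤ r → x (r + 1) ≤ x r) ∧
    Summable (fun n : ℕ => x (n + 1)) ∧ (∑' n : ℕ, x (n + 1)) ≤ 1

/-- `x₀ := 1 - |x|`. -/
noncomputable def xZero (x : ℕ → ℝ) : ℝ := 1 - ∑' n : ℕ, x (n + 1)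

/-- Kingman's paintbox count after `i` balls (the balls being `ξ 0, …, ξ (i-1)`):
the number of balls in box `0` plus the number of nonempty boxes among the boxes `r ≥ 1`. -/
def Ycount {Ω : Type*} (ξ : ℕ → Ω → ℕ) (i : ℕ) (ω : Ω) : ℕ :=
  ((Finset.range i).filter fun l => ξ l ω = 0).card +
    (((Finset.range i).image fun l => ξ l ω).erase 0).card

/-- the i.i.d. paintbox model driven by `x ∈ Δ`: the balls `ξ 0, ξ 1, …` are independent,
each with distribution `P(ξ l = 0) = x₀` and `P(ξ l = r) = x r` for `r ≥ 1`. -/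
structure IsPaintbox {Ω : Type*} [MeasurableSpace Ω] (P : Measure Ω)
    (x : ℕ → ℝ) (ξ : ℕ → Ω → ℕ) : Prop where
  meas : ∀ l, Measurable (ξ l)
  indep : iIndepFun ξ P
  dist0 : ∀ l, P {ω | ξ l ω = 0} = ENNReal.ofReal (xZero x)
  dist : ∀ l r : ℕ, 1 ≤ r → P {ω | ξ l ω = r} = ENNReal.ofReal (x r)

/-! `Y(i) = i` exactly when the balls outside box `0` all land in distinct boxes. Grouping the
outcomes `(ξ 0, …, ξ (i-1))` by the set `T` of balls outside box `0`, each of the `C(i, k)` sets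
with `#T = k` contributes `x₀ ^ (i - k)` times the sum of `x r₁ ⋯ x r_k` over injective `k`-tuples
of positive boxes. All sums are rearranged in `ℝ≥0∞`; the passage to `ℝ` at the end needs no
summability because the total is a probability. -/

open Finset

section FilterImage

variable {ι α : Type*} [DecidableEq α] (s : Finset ι) (g : ι → α) (a : α)

theorem image_erase_eq_image_filter_ne :
    (s.image g).erase a = {l ∈ s | g l ≠ a}.image g := by
  rw [← filter_ne', filter_image]

theorem card_filter_eq_add_card_image_erase_le :
    #{l ∈ s | g l = a} + #((s.image g).erase a) ≤ #s := by
  rw [image_erase_eq_image_filter_ne, ← card_filter_add_card_filter_not (s := s) (g · = a)]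
  exact Nat.add_le_add_left card_image_le _

theorem card_filter_eq_add_card_image_erase_eq_iff :
    #{l ∈ s | g l = a} + #((s.image g).erase a) = #s ↔ Set.InjOn g {l ∈ s | g l ≠ a} := by
  rw [image_erase_eq_image_filter_ne, ← card_filter_add_card_filter_not (s := s) (g · = a),
    Nat.add_left_cancel_iff, card_image_iff, coe_filter]

end FilterImage

theorem range_eq_map_valEmbedding (n : ℕ) : range n = univ.map (Fin.valEmbedding (n := n)) := by
  rw [Fin.map_valEmbedding_univ, Nat.Iio_eq_range]

section Ycount

variable {Ω : Type*} (ξ : ℕ → Ω → ℕ) (i : ℕ)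

theorem Ycount_le (ω : Ω) : Ycount ξ i ω ≤ i := by
  simpa [Ycount] using card_filter_eq_add_card_image_erase_le (range i) (ξ · ω) 0

theorem Ycount_eq_iff (ω : Ω) :
    Ycount ξ i ω = i ↔ Set.InjOn (fun l : Fin i => ξ l ω) {l | ξ l ω ≠ 0} := by
  have h := card_filter_eq_add_card_image_erase_eq_iff (univ : Finset (Fin i)) (ξ · ω) 0
  simp only [card_univ, Fintype.card_fin, mem_univ, true_and] at h
  rw [← h, Ycount, range_eq_map_valEmbedding, filter_map, card_map, map_eq_image, image_image]
  rfl

theorem setOf_Ycount_eq :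
    {ω | Ycount ξ i ω = i} =
      (fun ω (l : Fin i) => ξ l ω) ⁻¹' {f | Set.InjOn f {l | f l ≠ 0}} := by
  ext ω
  exact Ycount_eq_iff ξ i ω

theorem setOf_Ycount_lt_eq_compl :
    {ω | Ycount ξ i ω < i} = {ω | Ycount ξ i ω = i}ᶜ := by
  ext ω
  exact (Ycount_le ξ i ω).lt_iff_ne

end Ycount

open scoped ENNReal

section InjTupleSum

variable (q : ℕ → ℝ≥0∞)

noncomputable def injTupleSum (ι : Type*) [Fintype ι] : ℝ≥0∞ :=
  ∑' r : {r : ι → ℕ // Function.Injective r ∧ ∀ l, 1 ≤ r l}, ∏ l, q (r.1 l)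

theorem injTupleSum_of_isEmpty (ι : Type*) [Fintype ι] [IsEmpty ι] : injTupleSum q ι = 1 := by
  rw [injTupleSum, tsum_eq_single ⟨isEmptyElim, fun a => isEmptyElim a, isEmptyElim⟩
    fun r hr => (hr (Subtype.ext (funext isEmptyElim))).elim]
  simp

theorem injTupleSum_congr {ι κ : Type*} [Fintype ι] [Fintype κ] (e : ι ≃ κ) :
    injTupleSum q ι = injTupleSum q κ := by
  let E : {r : ι → ℕ // Function.Injective r ∧ ∀ l, 1 ≤ r l} ≃
      {r : κ → ℕ // Function.Injective r ∧ ∀ l, 1 ≤ r l} :=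
    (e.arrowCongr (Equiv.refl ℕ)).subtypeEquiv fun r =>
      and_congr (e.symm.injective_comp r).symm e.forall_congr_left
  rw [injTupleSum, injTupleSum, ← E.tsum_eq]
  exact tsum_congr fun r => (e.symm.prod_comp fun l => q (r.1 l)).symm

theorem toReal_injTupleSum {p : ℕ → ℝ} (hq : ∀ r, q r ≠ ∞)
    (hqp : ∀ r, 1 ≤ r → (q r).toReal = p r) (ι : Type*) [Fintype ι] :
    (injTupleSum q ι).toReal =
      ∑' r : {r : ι → ℕ // Function.Injective r ∧ ∀ l, 1 ≤ r l}, ∏ l, p (r.1 l) := by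
  rw [injTupleSum, ENNReal.tsum_toReal_eq fun r => ENNReal.prod_ne_top fun l _ => hq _]
  exact tsum_congr fun r => by
    rw [ENNReal.toReal_prod]
    exact prod_congr rfl fun l _ => hqp _ (r.2.2 l)

variable {ι : Type*} [Fintype ι] [DecidableEq ι]

def supportFiberEquiv (T : Finset ι) :
    {f : {f : ι → ℕ // Set.InjOn f {l | f l ≠ 0}} // ({l | f.1 l ≠ 0} : Finset ι) = T} ≃
      {r : T → ℕ // Function.Injective r ∧ ∀ l, 1 ≤ r l} where
  toFun f :=
    have hT : ∀ l, l ∈ T ↔ f.1.1 l ≠ 0 := by simp [← f.2]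
    ⟨fun l => f.1.1 l,
      fun a b hab => Subtype.ext (f.1.2 ((hT a).1 a.2) ((hT b).1 b.2) hab),
      fun l => Nat.one_le_iff_ne_zero.2 ((hT l).1 l.2)⟩
  invFun r :=
    have hT : ∀ l, (if h : l ∈ T then r.1 ⟨l, h⟩ else 0) ≠ 0 ↔ l ∈ T := fun l => by
      by_cases h : l ∈ T <;> simp [h, Nat.one_le_iff_ne_zero.1 (r.2.2 _)]
    ⟨⟨fun l => if h : l ∈ T then r.1 ⟨l, h⟩ else 0, fun a ha b hb hab => by
        have ha' := (hT a).1 ha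
        have hb' := (hT b).1 hb
        simp only [dif_pos ha', dif_pos hb'] at hab
        exact congrArg Subtype.val (r.2.1 hab)⟩,
      by ext l; simpa using hT l⟩
  left_inv f := by
    have hT : ∀ l, l ∈ T ↔ f.1.1 l ≠ 0 := by simp [← f.2]
    refine Subtype.ext (Subtype.ext (funext fun l => ?_))
    by_cases h : l ∈ T
    · simp [h]
    · simpa [h, eq_comm] using (hT l).not.1 h
  right_inv r := by
    ext l
    simp

theorem prod_comp_dite_mem_else_zero (T : Finset ι) (r : T → ℕ) :
    ∏ l, q (if h : l ∈ T then r ⟨l, h⟩ else 0) =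
      q 0 ^ (Fintype.card ι - #T) * ∏ l, q (r l) := by
  rw [← prod_mul_prod_compl T, mul_comm, ← prod_coe_sort T,
    prod_congr rfl fun l hl => by rw [dif_neg (mem_compl.1 hl)], prod_const, card_compl]
  simp

theorem tsum_fiber_eq (T : Finset ι) :
    ∑' f : {f : {f : ι → ℕ // Set.InjOn f {l | f l ≠ 0}} //
        ({l | f.1 l ≠ 0} : Finset ι) = T}, ∏ l, q (f.1.1 l) =
      q 0 ^ (Fintype.card ι - #T) * injTupleSum q (Fin #T) := by
  rw [← (supportFiberEquiv T).symm.tsum_eq, ← injTupleSum_congr q T.equivFin, injTupleSum,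
    ← ENNReal.tsum_mul_left]
  exact tsum_congr fun r => prod_comp_dite_mem_else_zero q T r.1

theorem tsum_prod_injOn_ne_zero :
    ∑' f : {f : ι → ℕ // Set.InjOn f {l | f l ≠ 0}}, ∏ l, q (f.1 l) =
      ∑ k ∈ range (Fintype.card ι + 1),
        (Fintype.card ι).choose k * q 0 ^ (Fintype.card ι - k) * injTupleSum q (Fin k) := by
  rw [← (Equiv.sigmaFiberEquiv fun f : {f : ι → ℕ // Set.InjOn f {l | f l ≠ 0}} =>
      ({l | f.1 l ≠ 0} : Finset ι)).tsum_eq, ENNReal.tsum_sigma', tsum_fintype,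
    ← powerset_univ, sum_powerset, card_univ]
  refine sum_congr rfl fun k _ => ?_
  simp only [Equiv.sigmaFiberEquiv_apply, tsum_fiber_eq]
  rw [sum_powersetCard k univ fun m => q 0 ^ (Fintype.card ι - m) * injTupleSum q (Fin m),
    card_univ, nsmul_eq_mul, mul_assoc]

end InjTupleSum

noncomputable def paintboxWeight (x : ℕ → ℝ) (r : ℕ) : ℝ≥0∞ :=
  ENNReal.ofReal (if r = 0 then xZero x else x r)

namespace IsPaintbox

variable {Ω : Type*} [MeasurableSpace Ω] {P : Measure Ω} {x : ℕ → ℝ} {ξ : ℕ → Ω → ℕ}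

theorem measure_preimage_singleton (hξ : IsPaintbox P x ξ) (l r : ℕ) :
    P (ξ l ⁻¹' {r}) = paintboxWeight x r := by
  rcases Nat.eq_zero_or_pos r with rfl | hr
  · rw [paintboxWeight, if_pos rfl]
    exact hξ.dist0 l
  · rw [paintboxWeight, if_neg hr.ne']
    exact hξ.dist l r hr

theorem measurable_tuple (hξ : IsPaintbox P x ξ) (i : ℕ) :
    Measurable fun ω (l : Fin i) => ξ l ω :=
  measurable_pi_lambda _ fun l => hξ.meas l

theorem measure_tuple_preimage (hξ : IsPaintbox P x ξ) (i : ℕ) (A : Set (Fin i → ℕ)) :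
    P ((fun ω (l : Fin i) => ξ l ω) ⁻¹' A) = ∑' f : A, ∏ l, paintboxWeight x (f.1 l) := by
  rw [← tsum_measure_preimage_singleton A.to_countable
    fun f _ => hξ.measurable_tuple i (measurableSet_singleton f)]
  refine tsum_congr fun f => ?_
  have hcyl : (fun ω (l : Fin i) => ξ l ω) ⁻¹' {f.1} =
      ⋂ l ∈ (univ : Finset (Fin i)), ξ l ⁻¹' {f.1 l} := by
    ext ω
    simp [funext_iff]
  rw [hcyl, (hξ.indep.precomp Fin.val_injective).measure_inter_preimage_eq_mul univ
    fun _ _ => measurableSet_singleton _]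
  exact prod_congr rfl fun l _ => hξ.measure_preimage_singleton l (f.1 l)

theorem measure_Ycount_eq (hξ : IsPaintbox P x ξ) (i : ℕ) :
    P {ω | Ycount ξ i ω = i} = paintboxWeight x 0 ^ i + ∑ k ∈ Icc 1 i,
      i.choose k * paintboxWeight x 0 ^ (i - k) * injTupleSum (paintboxWeight x) (Fin k) := by
  rw [setOf_Ycount_eq, hξ.measure_tuple_preimage]
  refine (tsum_prod_injOn_ne_zero _).trans ?_
  rw [Fintype.card_fin, range_eq_Ico, sum_eq_sum_Ico_succ_bot i.add_one_pos,
    Ico_add_one_right_eq_Icc, injTupleSum_of_isEmpty]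
  simp

theorem measurableSet_Ycount_eq (hξ : IsPaintbox P x ξ) (i : ℕ) :
    MeasurableSet {ω | Ycount ξ i ω = i} := by
  rw [setOf_Ycount_eq]
  exact hξ.measurable_tuple i (Set.to_countable _).measurableSet

theorem toReal_measure_Ycount_eq [IsFiniteMeasure P] (hx : MemDelta x) (hξ : IsPaintbox P x ξ)
    (i : ℕ) :
    (P {ω | Ycount ξ i ω = i}).toReal =
      xZero x ^ i + ∑ k ∈ Icc 1 i, (i.choose k : ℝ) * xZero x ^ (i - k) *
        ∑' r : {r : Fin k → ℕ // Function.Injective r ∧ ∀ l, 1 ≤ r l}, ∏ l, x (r.1 l) := by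
  obtain ⟨hx_nonneg, -, -, hx_le⟩ := hx
  have hw0 : (paintboxWeight x 0).toReal = xZero x := by
    rw [paintboxWeight, if_pos rfl]
    exact ENNReal.toReal_ofReal (sub_nonneg.2 hx_le)
  have hw : ∀ r, 1 ≤ r → (paintboxWeight x r).toReal = x r := fun r hr => by
    rw [paintboxWeight, if_neg (by omega), ENNReal.toReal_ofReal (hx_nonneg r hr)]
  have hfin := ENNReal.add_ne_top.1 (hξ.measure_Ycount_eq i ▸ measure_ne_top P _)
  rw [hξ.measure_Ycount_eq, ENNReal.toReal_add hfin.1 hfin.2,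
    ENNReal.toReal_sum (ENNReal.sum_ne_top.1 hfin.2)]
  simp only [ENNReal.toReal_mul, ENNReal.toReal_pow, ENNReal.toReal_natCast, hw0,
    toReal_injTupleSum (paintboxWeight x) (fun _ => ENNReal.ofReal_ne_top) hw]

end IsPaintbox

theorem statement1_general {Ω : Type*} [MeasurableSpace Ω] (P : Measure Ω) [IsProbabilityMeasure P]
    (x : ℕ → ℝ) (hx : MemDelta x) (ξ : ℕ → Ω → ℕ) (hξ : IsPaintbox P x ξ)
    (i : ℕ) :
    (P {ω | Ycount ξ i ω = i}).toReal =
      xZero x ^ i + ∑ k ∈ Finset.Icc 1 i, (Nat.choose i k : ℝ) * xZero x ^ (i - k) *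
        ∑' r : {r : Fin k → ℕ // Function.Injective r ∧ ∀ l, 1 ≤ r l}, ∏ l, x (r.1 l) ∧
    (P {ω | Ycount ξ i ω < i}).toReal =
      1 - (xZero x ^ i + ∑ k ∈ Finset.Icc 1 i, (Nat.choose i k : ℝ) * xZero x ^ (i - k) *
        ∑' r : {r : Fin k → ℕ // Function.Injective r ∧ ∀ l, 1 ≤ r l}, ∏ l, x (r.1 l)) := by
  have hEq := hξ.toReal_measure_Ycount_eq hx i
  refine ⟨hEq, ?_⟩
  rw [setOf_Ycount_lt_eq_compl, prob_compl_eq_one_sub (hξ.measurableSet_Ycount_eq i),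
    ENNReal.toReal_sub_of_le prob_le_one ENNReal.one_ne_top, ENNReal.toReal_one, hEq]

/-- for `x ∈ Δ` and `i ≥ 1`,
`P(Y(i,x) = i) = x₀^i + ∑_{k=1}^{i} C(i,k) x₀^{i-k} ∑_{r_1,…,r_k ≥ 1 distinct} x_{r_1} ⋯ x_{r_k}`
(the inner sum running over ordered tuples of pairwise distinct positive integers), and
equivalently `P(Y(i,x) < i) = 1 - (that same quantity)`. -/
theorem statement1 {Ω : Type*} [MeasurableSpace Ω] (P : Measure Ω) [IsProbabilityMeasure P]
    (x : ℕ → ℝ) (hx : MemDelta x) (ξ : ℕ → Ω → ℕ) (hξ : IsPaintbox P x ξ)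
    (i : ℕ) (hi : 1 ≤ i) :
    (P {ω | Ycount ξ i ω = i}).toReal =
      xZero x ^ i + ∑ k ∈ Finset.Icc 1 i, (Nat.choose i k : ℝ) * xZero x ^ (i - k) *
        ∑' r : {r : Fin k → ℕ // Function.Injective r ∧ ∀ l, 1 ≤ r l}, ∏ l, x (r.1 l) ∧
    (P {ω | Ycount ξ i ω < i}).toReal =
      1 - (xZero x ^ i + ∑ k ∈ Finset.Icc 1 i, (Nat.choose i k : ℝ) * xZero x ^ (i - k) *
        ∑' r : {r : Fin k → ℕ // Function.Injective r ∧ ∀ l, 1 ≤ r l}, ∏ l, x (r.1 l)) :=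
  statement1_general P x hx ξ hξ i
end

section
/- Let x ∈ Δ and let i ≥ 1 be an integer. If x_1 + ⋯ + x_i < 1 (i.e. x ∉ Δ_i), then lim_{k→∞} P(Y(k,x) ≤ i) = 0. If x_1 + ⋯ + x_i = 1 (i.e. x ∈ Δ_i), then P(Y(k,x) ≤ i) = 1 for every k ∈ ℕ. -/
/-!
If `x₁ + ⋯ + xᵢ < 1`, then `x₀ > 0` or `x_{i+1} > 0`: otherwise monotonicity kills every `x_r`
with `r > i` and `x₀ = 1 - (x₁ + ⋯ + xᵢ) > 0`. In the first case `Y(k) ≤ i` allows at most `i`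
balls in box `0`, so one of `i + 1` disjoint blocks of `⌊k / (i+1)⌋` balls avoids box `0`; in the
second it forces one of the boxes `1, …, i+1` (each of mass at least `x_{i+1}`) to stay empty. By
independence and a union bound, `P(Y(k) ≤ i)` is then at most `(i+1) (1 - q)^{m(k)}` with
`q > 0` and `m(k) → ∞`. If `x₁ + ⋯ + xᵢ = 1`, almost surely every ball lands in one of the boxes
`1, …, i`, so `Y(k) ≤ i` almost surely.
-/

open MeasureTheory ProbabilityTheory

open Filter Topology Finset
open scoped ENNReal

lemma Finset.sum_Icc_one_eq_sum_range {M : Type*} [AddCommMonoid M] (f : ℕ → M) (n : ℕ) :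
    ∑ r ∈ Icc 1 n, f r = ∑ r ∈ range n, f (r + 1) := by
  rw [← Ico_add_one_right_eq_Icc, range_eq_Ico, sum_Ico_add' f 0 n 1, zero_add]

lemma ENNReal.tendsto_nhds_zero_of_le_mul_pow {α : Type*} {l : Filter α} {f : α → ℝ≥0∞}
    {C a : ℝ≥0∞} {m : α → ℕ} (hC : C ≠ ∞) (ha : a < 1) (hm : Tendsto m l atTop)
    (hf : ∀ k, f k ≤ C * a ^ m k) : Tendsto f l (𝓝 0) := by
  have hbound : Tendsto (fun k => C * a ^ m k) l (𝓝 0) := by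
    simpa using ENNReal.Tendsto.const_mul
      ((ENNReal.tendsto_pow_atTop_nhds_zero_of_lt_one ha).comp hm) (Or.inr hC)
  exact tendsto_of_tendsto_of_tendsto_of_le_of_le tendsto_const_nhds hbound (fun _ => zero_le) hf

namespace MemDelta

variable {x : ℕ → ℝ}

lemma antitoneOn (hx : MemDelta x) : AntitoneOn x (Set.Ici 1) :=
  antitoneOn_nat_Ici_of_succ_le fun n hn => hx.2.1 n hn

lemma tsum_eq_sum_add_tsum (hx : MemDelta x) (i : ℕ) :
    ∑' n, x (n + 1) = ∑ r ∈ Icc 1 i, x r + ∑' n, x (n + i + 1) := by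
  rw [sum_Icc_one_eq_sum_range, ← hx.2.2.1.sum_add_tsum_nat_add i]

lemma tail_nonneg (hx : MemDelta x) (i : ℕ) : 0 ≤ ∑' n, x (n + i + 1) :=
  tsum_nonneg fun n => hx.1 _ (by omega)

lemma xZero_pos_or_pos_of_sum_lt_one (hx : MemDelta x) {i : ℕ}
    (h : ∑ r ∈ Icc 1 i, x r < 1) : 0 < xZero x ∨ 0 < x (i + 1) := by
  by_contra! hcon
  have htail : ∑' n, x (n + i + 1) = 0 :=
    le_antisymm (tsum_nonpos fun n => (hx.antitoneOn (Set.mem_Ici.2 (by omega))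
      (Set.mem_Ici.2 (by omega)) (by omega)).trans hcon.2) (hx.tail_nonneg i)
  have := hx.tsum_eq_sum_add_tsum i
  unfold xZero at hcon
  linarith [hcon.1]

lemma xZero_eq_zero_of_sum_eq_one (hx : MemDelta x) {i : ℕ} (h : ∑ r ∈ Icc 1 i, x r = 1) :
    xZero x = 0 ∧ ∀ r, i < r → x r = 0 := by
  have hsplit := hx.tsum_eq_sum_add_tsum i
  have htail : ∑' n, x (n + i + 1) = 0 := by
    linarith [hx.2.2.2, hx.tail_nonneg i]
  refine ⟨by unfold xZero; linarith, fun r hr => le_antisymm ?_ (hx.1 r (by omega))⟩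
  have hsumm : Summable fun n => x (n + i + 1) :=
    (summable_nat_add_iff i).2 hx.2.2.1
  obtain ⟨n, rfl⟩ : ∃ n, r = n + i + 1 := ⟨r - i - 1, by omega⟩
  exact htail ▸ hsumm.le_tsum n fun m _ => hx.1 _ (by omega)

end MemDelta

section Independence

variable {Ω ι κ β : Type*} [MeasurableSpace Ω] {P : Measure Ω} [IsProbabilityMeasure P]
  [MeasurableSpace β] [MeasurableSingletonClass β] {ξ : ι → Ω → β}

lemma measure_biInter_ne_le (hind : iIndepFun ξ P) (hmeas : ∀ l, Measurable (ξ l))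
    {S : Finset ι} {b : β} {c : ℝ≥0∞} (hc : ∀ l ∈ S, c ≤ P {ω | ξ l ω = b}) :
    P (⋂ l ∈ S, {ω | ξ l ω ≠ b}) ≤ (1 - c) ^ #S := by
  rw [hind.meas_biInter (s := fun l => {ω | ξ l ω ≠ b})
    fun l _ => ⟨{b}ᶜ, (measurableSet_singleton b).compl, rfl⟩]
  refine prod_le_pow_card _ _ _ fun l hl => ?_
  rw [show {ω | ξ l ω ≠ b} = {ω | ξ l ω = b}ᶜ from rfl]
  exact (prob_compl_eq_one_sub (hmeas l (measurableSet_singleton b))).trans_le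
    (tsub_le_tsub_left (hc l hl) 1)

lemma measure_biUnion_biInter_ne_le (hind : iIndepFun ξ P) (hmeas : ∀ l, Measurable (ξ l))
    {T : Finset κ} {S : κ → Finset ι} {b : κ → β} {c : ℝ≥0∞} {n : ℕ}
    (hS : ∀ j ∈ T, n ≤ #(S j)) (hc : ∀ j ∈ T, ∀ l ∈ S j, c ≤ P {ω | ξ l ω = b j}) :
    P (⋃ j ∈ T, ⋂ l ∈ S j, {ω | ξ l ω ≠ b j}) ≤ #T * (1 - c) ^ n :=
  calc P (⋃ j ∈ T, ⋂ l ∈ S j, {ω | ξ l ω ≠ b j})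
      ≤ ∑ j ∈ T, P (⋂ l ∈ S j, {ω | ξ l ω ≠ b j}) := measure_biUnion_finset_le _ _
    _ ≤ ∑ _j ∈ T, (1 - c) ^ n := sum_le_sum fun j hj =>
        (measure_biInter_ne_le hind hmeas (hc j hj)).trans
          (pow_le_pow_right_of_le_one' tsub_le_self (hS j hj))
    _ = #T * (1 - c) ^ n := by rw [sum_const, nsmul_eq_mul]

end Independence

section Ycount

variable {Ω : Type*} {ξ : ℕ → Ω → ℕ} {ω : Ω} {i k : ℕ}

lemma exists_unhit_box_of_Ycount_le (h : Ycount ξ k ω ≤ i) :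
    ∃ r ∈ Icc 1 (i + 1), ∀ l ∈ range k, ξ l ω ≠ r := by
  obtain ⟨r, hr, hr_unhit⟩ := exists_mem_notMem_of_card_lt_card
    (s := ((range k).image fun l => ξ l ω).erase 0) (t := Icc 1 (i + 1))
    (by unfold Ycount at h; simp only [Nat.card_Icc]; omega)
  refine ⟨r, hr, fun l hl hlr => hr_unhit (mem_erase.2 ⟨?_, hlr ▸ mem_image_of_mem _ hl⟩)⟩
  have := (mem_Icc.1 hr).1
  omega

lemma exists_block_avoiding_zero_of_Ycount_le (h : Ycount ξ k ω ≤ i) {m : ℕ}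
    (hm : (i + 1) * m ≤ k) :
    ∃ j ∈ range (i + 1), ∀ l ∈ Ico (j * m) (j * m + m), ξ l ω ≠ 0 := by
  obtain ⟨j, hj, hj_free⟩ := exists_mem_notMem_of_card_lt_card
    (s := ((range k).filter fun l => ξ l ω = 0).image (· / m)) (t := range (i + 1))
    (card_image_le.trans_lt (by unfold Ycount at h; rw [card_range]; omega))
  refine ⟨j, hj, fun l hl hl0 => hj_free (mem_image.2 ⟨l, mem_filter.2 ⟨?_, hl0⟩, ?_⟩)⟩
  · have hjm : j * m + m ≤ (i + 1) * m := by
      have := mem_range.1 hj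
      nlinarith
    rw [mem_range]
    linarith [(mem_Ico.1 hl).2]
  · exact Nat.div_eq_of_lt_le (mem_Ico.1 hl).1 (by linarith [(mem_Ico.1 hl).2])

lemma Ycount_le_of_forall_mem_Icc (h : ∀ l ∈ range k, ξ l ω ∈ Icc 1 i) :
    Ycount ξ k ω ≤ i := by
  have hno_zero : (range k).filter (fun l => ξ l ω = 0) = ∅ :=
    filter_eq_empty_iff.2 fun l hl => by have := (mem_Icc.1 (h l hl)).1; omega
  have hboxes : ((range k).image fun l => ξ l ω).erase 0 ⊆ Icc 1 i := fun r hr => by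
    obtain ⟨l, hl, rfl⟩ := mem_image.1 (mem_of_mem_erase hr)
    exact h l hl
  unfold Ycount
  simpa [hno_zero] using card_le_card hboxes

end Ycount

namespace IsPaintbox

variable {Ω : Type*} [MeasurableSpace Ω] {P : Measure Ω} [IsProbabilityMeasure P]
  {x : ℕ → ℝ} {ξ : ℕ → Ω → ℕ}

lemma tendsto_measure_Ycount_le_of_xZero_pos (hξ : IsPaintbox P x ξ) (h0 : 0 < xZero x)
    (i : ℕ) : Tendsto (fun k => P {ω | Ycount ξ k ω ≤ i}) atTop (𝓝 0) := by
  refine ENNReal.tendsto_nhds_zero_of_le_mul_pow (ENNReal.natCast_ne_top (i + 1))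
    (ENNReal.sub_lt_self ENNReal.one_ne_top one_ne_zero (ENNReal.ofReal_pos.2 h0).ne')
    (Nat.tendsto_div_const_atTop (Nat.succ_ne_zero i)) fun k => ?_
  calc P {ω | Ycount ξ k ω ≤ i}
      ≤ P (⋃ j ∈ range (i + 1), ⋂ l ∈ Ico (j * (k / (i + 1))) (j * (k / (i + 1)) + k / (i + 1)),
          {ω | ξ l ω ≠ 0}) := measure_mono fun ω hω => by
        simpa using exists_block_avoiding_zero_of_Ycount_le hω (Nat.mul_div_le k (i + 1))
    _ ≤ #(range (i + 1)) * (1 - ENNReal.ofReal (xZero x)) ^ (k / (i + 1)) :=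
        measure_biUnion_biInter_ne_le hξ.indep hξ.meas (fun _ _ => by simp)
          fun _ _ l _ => (hξ.dist0 l).ge
    _ = _ := by rw [card_range]

lemma tendsto_measure_Ycount_le_of_pos (hξ : IsPaintbox P x ξ) (hx : MemDelta x) {i : ℕ}
    (hpos : 0 < x (i + 1)) : Tendsto (fun k => P {ω | Ycount ξ k ω ≤ i}) atTop (𝓝 0) := by
  refine ENNReal.tendsto_nhds_zero_of_le_mul_pow (ENNReal.natCast_ne_top (i + 1))
    (ENNReal.sub_lt_self ENNReal.one_ne_top one_ne_zero (ENNReal.ofReal_pos.2 hpos).ne')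
    tendsto_id fun k => ?_
  have hmass : ∀ r ∈ Icc 1 (i + 1), ∀ l ∈ range k,
      ENNReal.ofReal (x (i + 1)) ≤ P {ω | ξ l ω = r} := fun r hr l _ => by
    obtain ⟨hr1, hri⟩ := mem_Icc.1 hr
    rw [hξ.dist l r hr1]
    exact ENNReal.ofReal_le_ofReal
      (hx.antitoneOn (Set.mem_Ici.2 hr1) (Set.mem_Ici.2 le_add_self) hri)
  calc P {ω | Ycount ξ k ω ≤ i}
      ≤ P (⋃ r ∈ Icc 1 (i + 1), ⋂ l ∈ range k, {ω | ξ l ω ≠ r}) := measure_mono fun ω hω => by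
        simpa using exists_unhit_box_of_Ycount_le hω
    _ ≤ #(Icc 1 (i + 1)) * (1 - ENNReal.ofReal (x (i + 1))) ^ k :=
        measure_biUnion_biInter_ne_le hξ.indep hξ.meas (fun _ _ => (card_range k).ge) hmass
    _ = _ := by rw [Nat.card_Icc, Nat.add_sub_cancel]; rfl

lemma measure_Ycount_le_eq_one (hξ : IsPaintbox P x ξ) (h0 : xZero x = 0) {i : ℕ}
    (htail : ∀ r, i < r → x r = 0) (k : ℕ) : P {ω | Ycount ξ k ω ≤ i} = 1 := by
  have hbox : ∀ l, ∀ᵐ ω ∂P, ξ l ω ∈ Icc 1 i := fun l => by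
    rw [ae_iff, show {ω | ξ l ω ∉ Icc 1 i} = ⋃ r ∈ {r | r ∉ Icc 1 i}, {ω | ξ l ω = r} by
      ext; simp, measure_biUnion_null_iff (Set.to_countable _)]
    intro r hr
    rcases Nat.eq_zero_or_pos r with rfl | hr1
    · rw [hξ.dist0, h0, ENNReal.ofReal_zero]
    · simp only [Set.mem_ofPred_eq, mem_Icc, not_and, not_le] at hr
      rw [hξ.dist l r hr1, htail r (hr hr1), ENNReal.ofReal_zero]
  have hY : ∀ᵐ ω ∂P, Ycount ξ k ω ≤ i :=
    (ae_all_iff.2 hbox).mono fun ω hω => Ycount_le_of_forall_mem_Icc fun l _ => hω l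
  exact (measure_congr (ae_eq_univ.2 (ae_iff.1 hY))).trans measure_univ

end IsPaintbox

theorem statement5_general {Ω : Type*} [MeasurableSpace Ω] (P : Measure Ω) [IsProbabilityMeasure P]
    (x : ℕ → ℝ) (hx : MemDelta x) (ξ : ℕ → Ω → ℕ) (hξ : IsPaintbox P x ξ)
    (i : ℕ) :
    ((∑ r ∈ Finset.Icc 1 i, x r) < 1 →
      Filter.Tendsto (fun k : ℕ => (P {ω | Ycount ξ k ω ≤ i}).toReal)
        Filter.atTop (nhds 0)) ∧
    ((∑ r ∈ Finset.Icc 1 i, x r) = 1 →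
      ∀ k : ℕ, P {ω | Ycount ξ k ω ≤ i} = 1) := by
  refine ⟨fun hlt => ?_, fun heq => ?_⟩
  · have hlim : Tendsto (fun k => P {ω | Ycount ξ k ω ≤ i}) atTop (𝓝 0) := by
      rcases hx.xZero_pos_or_pos_of_sum_lt_one hlt with h0 | hpos
      · exact hξ.tendsto_measure_Ycount_le_of_xZero_pos h0 i
      · exact hξ.tendsto_measure_Ycount_le_of_pos hx hpos
    exact (ENNReal.tendsto_toReal ENNReal.zero_ne_top).comp hlim
  · obtain ⟨h0, htail⟩ := hx.xZero_eq_zero_of_sum_eq_one heq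
    exact hξ.measure_Ycount_le_eq_one h0 htail

/-- for `x ∈ Δ` and `i ≥ 1`: if `x_1 + ⋯ + x_i < 1` (i.e. `x ∉ Δ_i`) then
`P(Y(k,x) ≤ i) → 0` as `k → ∞`; if `x_1 + ⋯ + x_i = 1` (i.e. `x ∈ Δ_i`) then
`P(Y(k,x) ≤ i) = 1` for every `k`. -/
theorem statement5 {Ω : Type*} [MeasurableSpace Ω] (P : Measure Ω) [IsProbabilityMeasure P]
    (x : ℕ → ℝ) (hx : MemDelta x) (ξ : ℕ → Ω → ℕ) (hξ : IsPaintbox P x ξ)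
    (i : ℕ) (hi : 1 ≤ i) :
    ((∑ r ∈ Finset.Icc 1 i, x r) < 1 →
      Filter.Tendsto (fun k : ℕ => (P {ω | Ycount ξ k ω ≤ i}).toReal)
        Filter.atTop (nhds 0)) ∧
    ((∑ r ∈ Finset.Icc 1 i, x r) = 1 →
      ∀ k : ℕ, P {ω | Ycount ξ k ω ≤ i} = 1) :=
  statement5_general P x hx ξ hξ i
end

section
/- (Siegmund duality of the rates of the block counting process and the fixation line.) Let c ≥ 0 and let ν be a Borel measure on Δ (with respect to the product topology on sequences). For integers 1 ≤ j < i define q_{ij} := c·C(i,2)·1_{{j = i−1}} + ∫_Δ P(Y(i,x) = j) ν(dx), and for integers 1 ≤ j < k define γ_{jk} := c·C(k,2)·1_{{k = j+1}} + ∫_Δ P(Y(k,x) = j, Y(k+1,x) = j+1) ν(dx), both Lebesgue integrals of the measurable nonnegative integrands taken with values in [0,∞]. Then for all integers i > j ≥ 1: Σ_{k=1}^{j} q_{ik} = ν(Δ_j) + Σ_{k=i}^{∞} γ_{jk}, as an identity in [0,∞]. -/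
open MeasureTheory ProbabilityTheory

/-- the distribution on `ℕ` of one paintbox ball driven by `x ∈ Δ`:
mass `x₀` at `0` and mass `x r` at each `r ≥ 1`. -/
noncomputable def paintMeasure (x : ℕ → ℝ) : Measure ℕ :=
  ENNReal.ofReal (xZero x) • Measure.dirac 0 +
    Measure.sum fun r : ℕ => ENNReal.ofReal (x (r + 1)) • Measure.dirac (r + 1)

/-- paintbox count for finitely many balls `ξ 0, …, ξ (m-1)`: the number of balls
in box `0` plus the number of nonempty boxes among the boxes `r ≥ 1`. -/
def YcountFin {m : ℕ} (ξ : Fin m → ℕ) : ℕ :=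
  (Finset.univ.filter fun l => ξ l = 0).card + ((Finset.univ.image ξ).erase 0).card

/-- `P(Y(i,x) = j)`, computed under the i.i.d. product measure of `i` balls. -/
noncomputable def probYeq (x : ℕ → ℝ) (i j : ℕ) : ENNReal :=
  Measure.pi (fun _ : Fin i => paintMeasure x) {ξ | YcountFin ξ = j}

/-- `P(Y(k,x) = j, Y(k+1,x) = j+1)`, computed under the i.i.d. product measure of
`k+1` balls, `Y(k,x)` being evaluated on the first `k` of them. -/
noncomputable def probYpair (x : ℕ → ℝ) (k j : ℕ) : ENNReal :=
  Measure.pi (fun _ : Fin (k + 1) => paintMeasure x)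
    {ξ | YcountFin (ξ ∘ Fin.castSucc) = j ∧ YcountFin ξ = j + 1}

/-!
For `x ∈ Δ` the count `Y(n, x)` is nondecreasing in `n` with increments `0` or `1`, so
`P(Y(n) ≤ j) = P(Y(n+1) ≤ j) + P(Y(n) = j, Y(n+1) = j+1)`. Telescoping from `n = i` gives
`∑_{k ≤ j} P(Y(i) = k) = ∑_{k ≥ i} P(Y(k) = j, Y(k+1) = j+1) + lim_n P(Y(n) ≤ j)`.
The limit is `1` on `Δ_j`, where every ball lands in one of the boxes `1, …, j`. Off `Δ_j`
some fixed configuration of `j + 1` balls has positive probability `δ` and produces `j + 1`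
blocks (`j + 1` dust balls if `x₀ > 0`, one ball in each of the boxes `1, …, j+1` otherwise),
so `P(Y(n + j + 1) ≤ j) ≤ (1 - δ) P(Y(n) ≤ j)` and the limit is `0`. Integrating over `Δ`
against `ν` gives the identity; the Kingman part contributes `c·C(i,2)` to both sides exactly
when `i = j + 1`.
-/

open scoped ENNReal

theorem ENNReal.eq_tsum_add_iInf_of_eq_add {a b : ℕ → ℝ≥0∞} (h : ∀ n, a n = a (n + 1) + b n) :
    a 0 = ∑' n, b n + ⨅ n, a n := by
  have partial_sum : ∀ N, a 0 = ∑ n ∈ Finset.range N, b n + a N := by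
    intro N
    induction N with
    | zero => simp
    | succ N ih => rw [ih, h N, Finset.sum_range_succ, add_assoc, add_comm (a _)]
  apply le_antisymm
  · rw [ENNReal.add_iInf]
    exact le_iInf fun N => (partial_sum N).trans_le (by gcongr; exact ENNReal.sum_le_tsum _)
  · rw [ENNReal.tsum_eq_iSup_nat, ENNReal.iSup_add]
    exact iSup_le fun N => (by gcongr; exact iInf_le a N : _ ≤ _ + a N).trans (partial_sum N).ge

namespace MeasureTheory

variable {α : Type*} [MeasurableSpace α] (μ : Measure α)

theorem measurePreserving_castAdd_natAdd [SigmaFinite μ] (n m : ℕ) :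
    MeasurePreserving
      (fun ξ : Fin (n + m) → α => (fun l => ξ (Fin.castAdd m l), fun l => ξ (Fin.natAdd n l)))
      (Measure.pi fun _ => μ) ((Measure.pi fun _ => μ).prod (Measure.pi fun _ => μ)) := by
  have h := (measurePreserving_sumPiEquivProdPi (fun _ : Fin n ⊕ Fin m => μ)).comp
    (measurePreserving_piCongrLeft (fun _ : Fin (n + m) => μ) finSumFinEquiv).symm
  exact h

theorem pi_castAdd_natAdd_preimage [SigmaFinite μ] {n m : ℕ} {A : Set (Fin n → α)}
    {B : Set (Fin m → α)} (hA : MeasurableSet A) (hB : MeasurableSet B) :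
    Measure.pi (fun _ => μ)
        {ξ : Fin (n + m) → α |
          (fun l => ξ (Fin.castAdd m l)) ∈ A ∧ (fun l => ξ (Fin.natAdd n l)) ∈ B} =
      Measure.pi (fun _ => μ) A * Measure.pi (fun _ => μ) B := by
  rw [← Measure.prod_prod, ← (measurePreserving_castAdd_natAdd μ n m).measure_preimage
    (hA.prod hB).nullMeasurableSet]
  rfl

theorem pi_preimage_comp_castSucc [IsProbabilityMeasure μ] {n : ℕ} {S : Set (Fin n → α)}
    (hS : MeasurableSet S) :
    Measure.pi (fun _ => μ) {ξ : Fin (n + 1) → α | ξ ∘ Fin.castSucc ∈ S} =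
      Measure.pi (fun _ => μ) S := by
  have h := pi_castAdd_natAdd_preimage μ hS (MeasurableSet.univ (α := Fin 1 → α))
  simp only [Set.mem_univ, and_true, measure_univ, mul_one] at h
  exact h

theorem measurable_measure_pi_apply {β ι : Type*} [MeasurableSpace β] [Fintype ι] [Countable α]
    [MeasurableSingletonClass α] {κ : β → Measure α} [∀ b, SigmaFinite (κ b)]
    (hκ : ∀ a, Measurable fun b => κ b {a}) (S : Set (ι → α)) :
    Measurable fun b => Measure.pi (fun _ : ι => κ b) S := by
  simp_rw [← Measure.tsum_indicator_apply_singleton _ S MeasurableSet.of_discrete,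
    Measure.pi_singleton]
  refine Measurable.tsum fun ξ => ?_
  by_cases hξ : ξ ∈ S
  · simpa [Set.indicator_of_mem hξ] using Finset.measurable_prod _ fun l _ => hκ (ξ l)
  · simp [Set.indicator_of_notMem hξ]

end MeasureTheory

section YcountFin

open Finset

theorem YcountFin_comp_le {m n : ℕ} (ξ : Fin n → ℕ) {e : Fin m → Fin n}
    (he : Function.Injective e) : YcountFin (ξ ∘ e) ≤ YcountFin ξ := by
  unfold YcountFin
  gcongr
  · exact card_le_card_of_injOn e (fun l hl => by simpa using hl) he.injOn
  · rw [← image_image]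
    exact image_subset_image (subset_univ _)

theorem YcountFin_le_comp_castSucc_add_one {n : ℕ} (ξ : Fin (n + 1) → ℕ) :
    YcountFin ξ ≤ YcountFin (ξ ∘ Fin.castSucc) + 1 := by
  have hzeros : #{l | ξ l = 0} = #{l | (ξ ∘ Fin.castSucc) l = 0} +
      if ξ (Fin.last n) = 0 then 1 else 0 := by
    rw [card_filter, card_filter, Fin.sum_univ_castSucc]
    rfl
  have himage : univ.image ξ = insert (ξ (Fin.last n)) (univ.image (ξ ∘ Fin.castSucc)) := by
    rw [Fin.univ_castSuccEmb, cons_eq_insert, image_insert, map_eq_image, image_image]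
    rfl
  unfold YcountFin
  rw [hzeros, himage]
  split_ifs with hlast
  · rw [hlast, erase_insert_eq_erase]
    omega
  · rw [erase_insert_of_ne hlast]
    have := card_insert_le (ξ (Fin.last n)) ((univ.image (ξ ∘ Fin.castSucc)).erase 0)
    omega

theorem one_le_YcountFin {n : ℕ} (hn : n ≠ 0) (ξ : Fin n → ℕ) : 1 ≤ YcountFin ξ := by
  have : NeZero n := ⟨hn⟩
  unfold YcountFin
  by_cases h : ξ 0 = 0
  · have : 0 < #{l | ξ l = 0} := card_pos.2 ⟨0, by simp [h]⟩
    omega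
  · have : 0 < #((univ.image ξ).erase 0) := card_pos.2 ⟨ξ 0, by simp [h]⟩
    omega

theorem YcountFin_le_of_forall_mem_Icc {n j : ℕ} {ξ : Fin n → ℕ}
    (h : ∀ l, ξ l ∈ Set.Icc 1 j) : YcountFin ξ ≤ j := by
  have hzeros : #{l | ξ l = 0} = 0 := by
    simp only [card_eq_zero, filter_eq_empty_iff]
    exact fun l _ => (Nat.one_le_iff_ne_zero.1 (h l).1)
  have hsub : (univ.image ξ).erase 0 ⊆ Icc 1 j := fun v hv => by
    obtain ⟨l, -, rfl⟩ := mem_image.1 (mem_of_mem_erase hv)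
    simpa using h l
  unfold YcountFin
  simpa [hzeros] using card_le_card hsub

theorem YcountFin_const_zero (n : ℕ) : YcountFin (fun _ : Fin n => 0) = n := by
  have : (univ.image fun _ : Fin n => 0).erase 0 = ∅ := by
    ext v
    simp only [mem_erase, mem_image]
    grind
  simp [YcountFin, this]

theorem YcountFin_of_injective {n : ℕ} {ξ : Fin n → ℕ} (hξ : Function.Injective ξ)
    (h0 : ∀ l, ξ l ≠ 0) : YcountFin ξ = n := by
  simp [YcountFin, h0, card_image_of_injective _ hξ]

end YcountFin

section PaintboxCount

variable (μ : Measure ℕ)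

theorem sum_pi_YcountFin_eq {i : ℕ} (hi : i ≠ 0) (j : ℕ) :
    ∑ k ∈ Finset.Icc 1 j, Measure.pi (fun _ : Fin i => μ) {ξ | YcountFin ξ = k} =
      Measure.pi (fun _ : Fin i => μ) {ξ | YcountFin ξ ≤ j} := by
  rw [← measure_biUnion_finset
    (fun k _ l _ hkl => Set.disjoint_left.2 fun ξ hk hl => hkl (hk.symm.trans hl))
    fun _ _ => MeasurableSet.of_discrete]
  congr 1
  ext ξ
  have := one_le_YcountFin hi ξ
  simp only [Set.mem_iUnion, Set.mem_ofPred_eq, Finset.mem_Icc, exists_prop]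
  grind

variable [IsProbabilityMeasure μ]

theorem pi_YcountFin_le_eq_add (j n : ℕ) :
    Measure.pi (fun _ : Fin n => μ) {ξ | YcountFin ξ ≤ j} =
      Measure.pi (fun _ : Fin (n + 1) => μ) {ξ | YcountFin ξ ≤ j} +
        Measure.pi (fun _ : Fin (n + 1) => μ)
          {ξ | YcountFin (ξ ∘ Fin.castSucc) = j ∧ YcountFin ξ = j + 1} := by
  rw [← pi_preimage_comp_castSucc μ MeasurableSet.of_discrete,
    ← measure_union (Set.disjoint_left.2 fun ξ h₁ h₂ => by simp_all) MeasurableSet.of_discrete]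
  congr 1
  ext ξ
  have h₁ := YcountFin_comp_le ξ (Fin.castSucc_injective n)
  have h₂ := YcountFin_le_comp_castSucc_add_one ξ
  simp only [Set.mem_ofPred_eq, Set.mem_union]
  omega

theorem pi_YcountFin_le_eq_tsum_add_iInf (i j : ℕ) :
    Measure.pi (fun _ : Fin i => μ) {ξ | YcountFin ξ ≤ j} =
      ∑' m, Measure.pi (fun _ : Fin (i + m + 1) => μ)
          {ξ | YcountFin (ξ ∘ Fin.castSucc) = j ∧ YcountFin ξ = j + 1} +
        ⨅ m, Measure.pi (fun _ : Fin (i + m) => μ) {ξ | YcountFin ξ ≤ j} :=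
  ENNReal.eq_tsum_add_iInf_of_eq_add fun m => pi_YcountFin_le_eq_add μ j (i + m)

theorem pi_YcountFin_le_eq_one {j : ℕ} (h : μ (Set.Icc 1 j) = 1) (n : ℕ) :
    Measure.pi (fun _ : Fin n => μ) {ξ | YcountFin ξ ≤ j} = 1 := by
  refine le_antisymm prob_le_one ?_
  calc 1 = Measure.pi (fun _ : Fin n => μ) (Set.univ.pi fun _ => Set.Icc 1 j) := by
        rw [Measure.pi_pi]; simp [h]
    _ ≤ _ := measure_mono fun ξ hξ =>
        YcountFin_le_of_forall_mem_Icc fun l => hξ l (Set.mem_univ l)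

theorem iInf_pi_YcountFin_le_eq_zero {j : ℕ} {β : Fin (j + 1) → ℕ} (hβ : YcountFin β = j + 1)
    (hβμ : Measure.pi (fun _ => μ) {β} ≠ 0) (i : ℕ) :
    ⨅ m, Measure.pi (fun _ : Fin (i + m) => μ) {ξ | YcountFin ξ ≤ j} = 0 := by
  set q := Measure.pi (fun _ : Fin (j + 1) => μ) {β}ᶜ with hq_def
  have hq : q < 1 := by
    rw [hq_def, prob_compl_eq_one_sub MeasurableSet.of_discrete]
    exact ENNReal.sub_lt_self ENNReal.one_ne_top one_ne_zero hβμ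
  have block : ∀ n, Measure.pi (fun _ : Fin (n + (j + 1)) => μ) {ξ | YcountFin ξ ≤ j} ≤
      Measure.pi (fun _ : Fin n => μ) {ξ | YcountFin ξ ≤ j} * q := by
    intro n
    rw [← pi_castAdd_natAdd_preimage μ MeasurableSet.of_discrete MeasurableSet.of_discrete]
    refine measure_mono fun ξ hξ => ⟨(YcountFin_comp_le ξ (Fin.castAdd_injective _ _)).trans hξ,
      fun hlast => ?_⟩
    have := YcountFin_comp_le ξ (Fin.natAdd_injective (j + 1) n)
    simp only [Set.mem_singleton_iff] at hlast
    simp only [Set.mem_ofPred_eq] at hξ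
    rw [show ξ ∘ Fin.natAdd n = β from hlast, hβ] at this
    omega
  have iterate : ∀ M, Measure.pi (fun _ : Fin (i + (j + 1) * M) => μ) {ξ | YcountFin ξ ≤ j} ≤
      q ^ M := by
    intro M
    induction M with
    | zero => simpa using prob_le_one
    | succ M ih =>
      rw [mul_add_one, ← add_assoc, pow_succ]
      exact (block _).trans (mul_le_mul_left ih q)
  exact nonpos_iff_eq_zero.1 (ge_of_tendsto' (ENNReal.tendsto_pow_atTop_nhds_zero_of_lt_one hq)
    fun M => (iInf_le _ _).trans (iterate M))

end PaintboxCount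

theorem paintMeasure_singleton_zero (x : ℕ → ℝ) :
    paintMeasure x {0} = ENNReal.ofReal (xZero x) := by
  simp [paintMeasure, Measure.sum_apply _ (measurableSet_singleton _)]

theorem paintMeasure_singleton_of_ne_zero (x : ℕ → ℝ) {r : ℕ} (hr : r ≠ 0) :
    paintMeasure x {r} = ENNReal.ofReal (x r) := by
  obtain ⟨r, rfl⟩ := Nat.exists_eq_succ_of_ne_zero hr
  simp [paintMeasure, Measure.sum_apply _ (measurableSet_singleton _), Set.indicator_apply]

theorem paintMeasure_singleton_ne_top (x : ℕ → ℝ) (r : ℕ) : paintMeasure x {r} ≠ ⊤ := by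
  rcases eq_or_ne r 0 with rfl | hr
  · simp [paintMeasure_singleton_zero]
  · simp [paintMeasure_singleton_of_ne_zero x hr]

instance (x : ℕ → ℝ) : SigmaFinite (paintMeasure x) :=
  Measure.sigmaFinite_of_countable (Set.countable_range fun r : ℕ => ({r} : Set ℕ))
    (by rintro _ ⟨r, rfl⟩; exact (paintMeasure_singleton_ne_top x r).lt_top)
    (by rw [Set.sUnion_range, Set.iUnion_singleton_eq_range, Set.range_id'])

theorem measurable_paintMeasure_singleton (r : ℕ) :
    Measurable fun x => paintMeasure x {r} := by
  rcases eq_or_ne r 0 with rfl | hr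
  · simp_rw [paintMeasure_singleton_zero, xZero]
    exact ENNReal.measurable_ofReal.comp
      (measurable_const.sub (Measurable.tsum fun n => measurable_pi_apply (n + 1)))
  · simp_rw [paintMeasure_singleton_of_ne_zero _ hr]
    exact ENNReal.measurable_ofReal.comp (measurable_pi_apply r)

section MemDelta

variable {x : ℕ → ℝ}

theorem MemDelta.antitone (hx : MemDelta x) : Antitone fun n => x (n + 1) :=
  antitone_nat_of_succ_le fun n => hx.2.1 (n + 1) n.succ_pos

theorem MemDelta.sum_Icc_eq_tsum (hx : MemDelta x) {j : ℕ} (hj : x (j + 1) = 0) :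
    ∑ r ∈ Finset.Icc 1 j, x r = ∑' n, x (n + 1) := by
  have tail : ∀ n ∉ Finset.range j, x (n + 1) = 0 := fun n hn =>
    le_antisymm (hj ▸ hx.antitone (by simpa using hn)) (hx.1 (n + 1) n.succ_pos)
  rw [tsum_eq_sum tail, Finset.range_eq_Ico, Finset.sum_Ico_add', zero_add,
    Finset.Ico_add_one_right_eq_Icc]

theorem isProbabilityMeasure_paintMeasure (hx : MemDelta x) :
    IsProbabilityMeasure (paintMeasure x) := by
  obtain ⟨hnn, -, hsummable, hle⟩ := hx
  have hnn' : ∀ n : ℕ, 0 ≤ x (n + 1) := fun n => hnn (n + 1) n.succ_pos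
  constructor
  simp only [paintMeasure, Measure.add_apply, Measure.smul_apply,
    Measure.sum_apply _ MeasurableSet.univ, measure_univ, smul_eq_mul, mul_one]
  rw [← ENNReal.ofReal_tsum_of_nonneg hnn' hsummable, xZero,
    ← ENNReal.ofReal_add (sub_nonneg.2 hle) (tsum_nonneg hnn'), sub_add_cancel, ENNReal.ofReal_one]

theorem paintMeasure_Icc (hx : MemDelta x) (j : ℕ) :
    paintMeasure x (Set.Icc 1 j) = ENNReal.ofReal (∑ r ∈ Finset.Icc 1 j, x r) := by
  rw [← Finset.coe_Icc, ← sum_measure_singleton,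
    ENNReal.ofReal_sum_of_nonneg fun r hr => hx.1 r (Finset.mem_Icc.1 hr).1]
  exact Finset.sum_congr rfl fun r hr =>
    paintMeasure_singleton_of_ne_zero x (Nat.one_le_iff_ne_zero.1 (Finset.mem_Icc.1 hr).1)

theorem MemDelta.exists_YcountFin_eq_of_sum_Icc_ne_one (hx : MemDelta x) {j : ℕ}
    (h : ∑ r ∈ Finset.Icc 1 j, x r ≠ 1) :
    ∃ β : Fin (j + 1) → ℕ,
      YcountFin β = j + 1 ∧ Measure.pi (fun _ => paintMeasure x) {β} ≠ 0 := by
  by_cases hx0 : 0 < xZero x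
  · refine ⟨fun _ => 0, YcountFin_const_zero _, ?_⟩
    simp [Measure.pi_singleton, paintMeasure_singleton_zero, hx0]
  · have hsum : ∑' n, x (n + 1) = 1 := by
      unfold xZero at hx0
      linarith [hx.2.2.2]
    have hpos : 0 < x (j + 1) :=
      (hx.1 _ j.succ_pos).lt_of_ne fun h0 => h ((hx.sum_Icc_eq_tsum h0.symm).trans hsum)
    refine ⟨fun t => t + 1, YcountFin_of_injective (fun a b hab => Fin.ext (by simpa using hab))
      fun t => t.val.succ_ne_zero, ?_⟩
    rw [Measure.pi_singleton, Finset.prod_ne_zero_iff]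
    intro t _
    rw [paintMeasure_singleton_of_ne_zero _ t.val.succ_ne_zero]
    exact (ENNReal.ofReal_pos.2 (hpos.trans_le (hx.antitone (Nat.lt_succ_iff.1 t.isLt)))).ne'

theorem sum_probYeq_eq (hx : MemDelta x) {i : ℕ} (hi : i ≠ 0) (j : ℕ) :
    ∑ k ∈ Finset.Icc 1 j, probYeq x i k =
      {x : ℕ → ℝ | ∑ r ∈ Finset.Icc 1 j, x r = 1}.indicator 1 x +
        ∑' m, probYpair x (i + m) j := by
  have := isProbabilityMeasure_paintMeasure hx
  simp only [probYeq, probYpair]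
  rw [sum_pi_YcountFin_eq _ hi, pi_YcountFin_le_eq_tsum_add_iInf, add_comm]
  congr 1
  simp only [Set.indicator_apply, Set.mem_ofPred_eq, Pi.one_apply]
  split_ifs with h
  · have hfull : paintMeasure x (Set.Icc 1 j) = 1 := by
      rw [paintMeasure_Icc hx, h, ENNReal.ofReal_one]
    simp [pi_YcountFin_le_eq_one _ hfull]
  · obtain ⟨β, hβ, hβx⟩ := hx.exists_YcountFin_eq_of_sum_Icc_ne_one h
    exact iInf_pi_YcountFin_le_eq_zero _ hβ hβx i

end MemDelta

theorem measurableSet_memDelta : MeasurableSet {x : ℕ → ℝ | MemDelta x} := by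
  have summable : MeasurableSet {x : ℕ → ℝ | Summable fun n => x (n + 1)} :=
    measurableSet_exists_tendsto fun s =>
      Finset.measurable_sum s fun n _ => measurable_pi_apply (n + 1)
  simp only [MemDelta, Set.ofPred_and, Set.ofPred_forall]
  exact .inter (.iInter fun r => .iInter fun _ => measurableSet_le measurable_const
    (measurable_pi_apply r)) (.inter (.iInter fun r => .iInter fun _ =>
      measurableSet_le (measurable_pi_apply _) (measurable_pi_apply r))
    (summable.inter (measurableSet_le (Measurable.tsum fun n => measurable_pi_apply (n + 1))
      measurable_const)))

theorem sum_Icc_kingman_eq_tsum (a : ℝ≥0∞) {i j : ℕ} (hji : j < i) :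
    ∑ k ∈ Finset.Icc 1 j, a * (i.choose 2 : ℝ≥0∞) * (if k = i - 1 then 1 else 0) =
      ∑' m, a * ((i + m).choose 2 : ℝ≥0∞) * (if i + m = j + 1 then 1 else 0) := by
  rw [tsum_eq_single 0 fun m hm => by rw [if_neg (by omega), mul_zero]]
  simp only [mul_ite, mul_one, mul_zero, Finset.sum_ite_eq', Finset.mem_Icc, add_zero]
  rcases Nat.lt_or_ge i 2 with hi | hi
  · simp [Nat.choose_eq_zero_of_lt hi]
  · congr 1
    apply propext
    omega

theorem statement7_general (c : ℝ) (ν : Measure (ℕ → ℝ))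
    (i j : ℕ) (hji : j < i) :
    (∑ k ∈ Finset.Icc 1 j,
        (ENNReal.ofReal c * (Nat.choose i 2 : ENNReal) * (if k = i - 1 then 1 else 0) +
          ∫⁻ x in {x | MemDelta x}, probYeq x i k ∂ν)) =
      ν {x | MemDelta x ∧ ∑ r ∈ Finset.Icc 1 j, x r = 1} +
        ∑' m : ℕ,
          (ENNReal.ofReal c * (Nat.choose (i + m) 2 : ENNReal) *
              (if i + m = j + 1 then 1 else 0) +
            ∫⁻ x in {x | MemDelta x}, probYpair x (i + m) j ∂ν) := by
  have hΔj : MeasurableSet {x : ℕ → ℝ | ∑ r ∈ Finset.Icc 1 j, x r = 1} :=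
    Finset.measurable_sum _ (fun r _ => measurable_pi_apply r) (measurableSet_singleton 1)
  have hprob : ∀ n (S : Set (Fin n → ℕ)),
      Measurable fun x => Measure.pi (fun _ => paintMeasure x) S :=
    fun n => measurable_measure_pi_apply measurable_paintMeasure_singleton
  rw [Finset.sum_add_distrib, ENNReal.tsum_add, sum_Icc_kingman_eq_tsum _ hji, add_left_comm]
  congr 1
  calc ∑ k ∈ Finset.Icc 1 j, ∫⁻ x in {x | MemDelta x}, probYeq x i k ∂ν
      = ∫⁻ x in {x | MemDelta x}, ∑ k ∈ Finset.Icc 1 j, probYeq x i k ∂ν :=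
        (lintegral_finsetSum _ fun k _ => hprob i _).symm
    _ = ∫⁻ x in {x | MemDelta x},
          ({x : ℕ → ℝ | ∑ r ∈ Finset.Icc 1 j, x r = 1}.indicator 1 x +
            ∑' m, probYpair x (i + m) j) ∂ν :=
        setLIntegral_congr_fun measurableSet_memDelta fun x hx => sum_probYeq_eq hx (by omega) j
    _ = _ := by
        rw [lintegral_add_left (measurable_one.indicator hΔj),
          lintegral_tsum (f := fun m x => probYpair x (i + m) j) fun m => (hprob _ _).aemeasurable,
          lintegral_indicator_one hΔj,
          Measure.restrict_apply hΔj, Set.inter_comm]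
        rfl

/-- Siegmund duality of the rates: for `c ≥ 0`, a (Borel) measure `ν` on the
sequence space carried by `Δ` over which we integrate, and integers `i > j ≥ 1`:
`∑_{k=1}^{j} q_{ik} = ν(Δ_j) + ∑_{k=i}^{∞} γ_{jk}` in `[0,∞]`, where
`q_{ik} = c·C(i,2)·1_{k=i-1} + ∫_Δ P(Y(i,x)=k) ν(dx)` and
`γ_{jk} = c·C(k,2)·1_{k=j+1} + ∫_Δ P(Y(k,x)=j, Y(k+1,x)=j+1) ν(dx)`
(the sum over `k ≥ i` being written with `k = i + m`, `m : ℕ`). -/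
theorem statement7 (c : ℝ) (hc : 0 ≤ c) (ν : Measure (ℕ → ℝ))
    (i j : ℕ) (hj : 1 ≤ j) (hji : j < i) :
    (∑ k ∈ Finset.Icc 1 j,
        (ENNReal.ofReal c * (Nat.choose i 2 : ENNReal) * (if k = i - 1 then 1 else 0) +
          ∫⁻ x in {x | MemDelta x}, probYeq x i k ∂ν)) =
      ν {x | MemDelta x ∧ ∑ r ∈ Finset.Icc 1 j, x r = 1} +
        ∑' m : ℕ,
          (ENNReal.ofReal c * (Nat.choose (i + m) 2 : ENNReal) *
              (if i + m = j + 1 then 1 else 0) +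
            ∫⁻ x in {x | MemDelta x}, probYpair x (i + m) j ∂ν) :=
  statement7_general c ν i j hji
end

section
/- Let a, b, r ∈ ℝ and t ∈ ℝ with t ∉ {0, a, 2a, 3a, …}. Define the generalized Stirling numbers S(i,j) := S(i,j;a,b,r) by S(0,0) = 1, S(i,j) = 0 whenever j < 0 or j > i, and the recursion S(i+1,j) = S(i,j−1) + (jb − ia + r)·S(i,j). For i, j ≥ 0 set q_{ij} := ((t−r|b)_j / (t|a)_i) · S(i,j), where (x|y)_n := Π_{k=0}^{n−1}(x − ky), and set q_{i,≤j} := Σ_{m=0}^{j} q_{im}. Fix j ≥ 0 and suppose the limit L := lim_{k→∞} q_{k,≤j} exists. Then for every i ≥ 0 the series Σ_{k=i}^{∞} ((t − r − jb)/(t − ka)) · q_{kj} converges and q_{i,≤j} − L = Σ_{k=i}^{∞} ((t − r − jb)/(t − ka)) · q_{kj}. -/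
/-!
The recursion for `S` gives `q_{k+1,≤j} = q_{k,≤j} - ((t-r-jb)/(t-ka)) q_{kj}`, so the partial
sums of the series telescope to `q_{i,≤j} - q_{n,≤j} → q_{i,≤j} - L`. Since `HasSum` over `ℝ`
means unconditional convergence, what remains is absolute convergence. For `a ≠ 0` the
coefficients of the recursion of `q_{k,m}` in `k` are eventually nonnegative, so each `q_{k,m}` is
eventually of one sign in `k`, and convergent partial sums force summability. For `a = 0` the
recursion has constant coefficients: `q_{k,j}` is a combination of the geometric sequences
`((lb+r)/t)^k`, `l ≤ j`, with distinct ratios if `b ≠ 0`, and equals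
`(k choose j) ((t-r)/t)^j (r/t)^(k-j)` if `b = 0`; in both cases `q_{k,j} → 0` forces geometric
decay.
-/

/-- the generalized Stirling numbers `S(i,j; a,b,r)` of Hsu and Shiue, defined by
`S(0,0) = 1`, `S(i,j) = 0` for `j > i` (automatic below), and the recursion
`S(i+1,j) = S(i,j-1) + (jb - ia + r) S(i,j)` (with `S(i,-1) := 0`). -/
noncomputable def gstir (a b r : ℝ) : ℕ → ℕ → ℝ
  | 0, 0 => 1
  | 0, _ + 1 => 0
  | i + 1, 0 => (r - i * a) * gstir a b r i 0
  | i + 1, j + 1 => gstir a b r i j + (((j : ℝ) + 1) * b - i * a + r) * gstir a b r i (j + 1)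

/-- the generalized factorial `(x|y)_n := ∏_{k=0}^{n-1} (x - k y)`. -/
noncomputable def genFall (x y : ℝ) (n : ℕ) : ℝ := ∏ k ∈ Finset.range n, (x - k * y)

/-- `q_{ij} := ((t-r|b)_j / (t|a)_i) S(i,j;a,b,r)`. -/
noncomputable def qgen (a b r t : ℝ) (i j : ℕ) : ℝ :=
  genFall (t - r) b j / genFall t a i * gstir a b r i j

open Filter Finset Topology

section Recursion

variable {a b r t : ℝ}

lemma genFall_succ (x y : ℝ) (n : ℕ) : genFall x y (n + 1) = genFall x y n * (x - n * y) :=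
  prod_range_succ _ n

lemma genFall_ne_zero (ht : ∀ k : ℕ, t ≠ k * a) (n : ℕ) : genFall t a n ≠ 0 :=
  prod_ne_zero_iff.2 fun k _ => sub_ne_zero.2 (ht k)

lemma qgen_zero_left (m : ℕ) : qgen a b r t 0 m = if m = 0 then 1 else 0 := by
  cases m <;> simp [qgen, genFall, gstir]

lemma qgen_succ_zero (ht : ∀ k : ℕ, t ≠ k * a) (k : ℕ) :
    qgen a b r t (k + 1) 0 = (r - k * a) / (t - k * a) * qgen a b r t k 0 := by
  have := genFall_ne_zero ht k
  have := sub_ne_zero.2 (ht k)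
  simp only [qgen, genFall_succ, gstir]
  field_simp

lemma qgen_succ_succ (ht : ∀ k : ℕ, t ≠ k * a) (k m : ℕ) :
    qgen a b r t (k + 1) (m + 1) =
      (t - r - m * b) / (t - k * a) * qgen a b r t k m
        + ((m + 1) * b + r - k * a) / (t - k * a) * qgen a b r t k (m + 1) := by
  have := genFall_ne_zero ht k
  have := sub_ne_zero.2 (ht k)
  simp only [qgen, genFall_succ, gstir]
  field_simp
  ring

/-- `q_{i,≤j}` -/
noncomputable def qgenUpTo (a b r t : ℝ) (i j : ℕ) : ℝ :=
  ∑ m ∈ range (j + 1), qgen a b r t i m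

lemma qgenUpTo_succ (ht : ∀ k : ℕ, t ≠ k * a) (k j : ℕ) :
    qgenUpTo a b r t (k + 1) j =
      qgenUpTo a b r t k j - (t - r - j * b) / (t - k * a) * qgen a b r t k j := by
  have := sub_ne_zero.2 (ht k)
  induction j with
  | zero =>
    simp only [qgenUpTo, zero_add, sum_range_one, qgen_succ_zero ht, CharP.cast_eq_zero]
    field_simp
    ring
  | succ j ih =>
    simp only [qgenUpTo] at ih ⊢
    rw [sum_range_succ _ (j + 1), sum_range_succ _ (j + 1), ih, qgen_succ_succ ht]
    push_cast
    field_simp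
    ring

end Recursion

lemma hasSum_of_eq_sub_succ {Q f : ℕ → ℝ} {L : ℝ} (hf : Summable f)
    (hQf : ∀ k, f k = Q k - Q (k + 1)) (hQ : Tendsto Q atTop (𝓝 L)) : HasSum f (Q 0 - L) := by
  refine hf.hasSum_iff_tendsto_nat.2 ((tendsto_const_nhds.sub hQ).congr fun n => ?_)
  simp only [hQf, sum_range_sub']

def EventuallyOneSigned (u : ℕ → ℝ) : Prop :=
  (∀ᶠ k in atTop, 0 ≤ u k) ∨ ∀ᶠ k in atTop, u k ≤ 0

namespace EventuallyOneSigned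

variable {u v w lam : ℕ → ℝ}

lemma neg (hu : EventuallyOneSigned u) : EventuallyOneSigned fun k => -u k := by
  rcases hu with hu | hu
  · exact Or.inr (hu.mono fun k => neg_nonpos.2)
  · exact Or.inl (hu.mono fun k => neg_nonneg.2)

lemma const (c : ℝ) : EventuallyOneSigned fun _ => c :=
  (le_total 0 c).imp (fun h => .of_forall fun _ => h) fun h => .of_forall fun _ => h

lemma mul (hu : EventuallyOneSigned u) (hv : EventuallyOneSigned v) :
    EventuallyOneSigned fun k => u k * v k := by
  rcases hu with hu | hu <;> rcases hv with hv | hv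
  · exact Or.inl ((hu.and hv).mono fun k h => mul_nonneg h.1 h.2)
  · exact Or.inr ((hu.and hv).mono fun k h => mul_nonpos_of_nonneg_of_nonpos h.1 h.2)
  · exact Or.inr ((hu.and hv).mono fun k h => mul_nonpos_of_nonpos_of_nonneg h.1 h.2)
  · exact Or.inl ((hu.and hv).mono fun k h => mul_nonneg_of_nonpos_of_nonpos h.1 h.2)

lemma of_recurrence_of_nonneg (hlam : ∀ᶠ k in atTop, 0 ≤ lam k) (hw : ∀ᶠ k in atTop, 0 ≤ w k)
    (h : ∀ k, u (k + 1) = lam k * u k + w k) : EventuallyOneSigned u := by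
  by_cases hneg : ∀ᶠ k in atTop, u k ≤ 0
  · exact Or.inr hneg
  obtain ⟨N, hN⟩ := (hlam.and hw).exists_forall_of_atTop
  obtain ⟨K, hNK, hK⟩ := (not_eventually.1 hneg).forall_exists_of_atTop N
  refine Or.inl (eventually_atTop.2 ⟨K, fun k hk => ?_⟩)
  induction k, hk using Nat.le_induction with
  | base => exact (not_le.1 hK).le
  | succ k hKk ih =>
    rw [h k]
    have := hN k (hNK.trans hKk)
    exact add_nonneg (mul_nonneg this.1 ih) this.2

lemma of_recurrence (hlam : ∀ᶠ k in atTop, 0 ≤ lam k) (hw : EventuallyOneSigned w)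
    (h : ∀ k, u (k + 1) = lam k * u k + w k) : EventuallyOneSigned u := by
  rcases hw with hw | hw
  · exact of_recurrence_of_nonneg hlam hw h
  · have := of_recurrence_of_nonneg (u := fun k => -u k) hlam (hw.mono fun k => neg_nonneg.2)
      fun k => by rw [h k]; ring
    simpa using this.neg

lemma summable_of_nonneg {g : ℕ → ℝ} {S : ℝ} (hg : ∀ᶠ k in atTop, 0 ≤ g k)
    (h : Tendsto (fun n => ∑ k ∈ range n, g k) atTop (𝓝 S)) : Summable g := by
  obtain ⟨N, hN⟩ := hg.exists_forall_of_atTop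
  rw [← summable_nat_add_iff N]
  refine ((hasSum_iff_tendsto_nat_of_nonneg (fun k => hN _ (N.le_add_left k))
    (S - ∑ k ∈ range N, g k)).2 ?_).summable
  refine (((tendsto_add_atTop_iff_nat N).2 h).sub_const (∑ k ∈ range N, g k)).congr fun n => ?_
  rw [add_comm, sum_range_add]
  simp [add_comm]

lemma summable {g : ℕ → ℝ} {S : ℝ} (hg : EventuallyOneSigned g)
    (h : Tendsto (fun n => ∑ k ∈ range n, g k) atTop (𝓝 S)) : Summable g := by
  rcases hg with hg | hg
  · exact summable_of_nonneg hg h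
  · rw [← summable_neg_iff]
    exact summable_of_nonneg (S := -S) (hg.mono fun k => neg_nonneg.2)
      (by simpa only [sum_neg_distrib] using h.neg)

end EventuallyOneSigned

section SignOfLinear

variable {a : ℝ}

lemma eventually_sub_nat_mul_neg (ha : 0 < a) (x : ℝ) : ∀ᶠ k : ℕ in atTop, x - k * a < 0 :=
  ((tendsto_natCast_atTop_atTop.atTop_mul_const ha).eventually_gt_atTop x).mono fun _ => sub_neg.2

lemma eventually_sub_nat_mul_pos (ha : a < 0) (x : ℝ) : ∀ᶠ k : ℕ in atTop, 0 < x - k * a :=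
  (eventually_sub_nat_mul_neg (neg_pos.2 ha) (-x)).mono fun k hk => by linarith [mul_neg (k : ℝ) a]

lemma eventually_div_sub_nat_mul_nonneg (ha : a ≠ 0) (x y : ℝ) :
    ∀ᶠ k : ℕ in atTop, 0 ≤ (x - k * a) / (y - k * a) := by
  rcases ha.lt_or_gt with ha | ha
  · exact ((eventually_sub_nat_mul_pos ha x).and (eventually_sub_nat_mul_pos ha y)).mono
      fun k h => (div_pos h.1 h.2).le
  · exact ((eventually_sub_nat_mul_neg ha x).and (eventually_sub_nat_mul_neg ha y)).mono
      fun k h => (div_pos_of_neg_of_neg h.1 h.2).le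

lemma eventuallyOneSigned_div_sub_nat_mul (ha : a ≠ 0) (c y : ℝ) :
    EventuallyOneSigned fun k : ℕ => c / (y - k * a) := by
  refine (EventuallyOneSigned.const c).mul ?_
  rcases ha.lt_or_gt with ha | ha
  · exact Or.inl ((eventually_sub_nat_mul_pos ha y).mono fun k h => inv_nonneg.2 h.le)
  · exact Or.inr ((eventually_sub_nat_mul_neg ha y).mono fun k h => inv_nonpos.2 h.le)

end SignOfLinear

lemma eventuallyOneSigned_qgen {a b r t : ℝ} (ha : a ≠ 0) (ht : ∀ k : ℕ, t ≠ k * a) (m : ℕ) :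
    EventuallyOneSigned fun k => qgen a b r t k m := by
  induction m with
  | zero =>
    refine .of_recurrence (eventually_div_sub_nat_mul_nonneg ha r t) (.const 0) fun k => ?_
    rw [qgen_succ_zero ht, add_zero]
  | succ m ih =>
    exact .of_recurrence (eventually_div_sub_nat_mul_nonneg ha _ t)
      ((eventuallyOneSigned_div_sub_nat_mul ha (t - r - m * b) t).mul ih)
      fun k => by rw [qgen_succ_succ ht, add_comm]

lemma tendsto_mul_pow_of_tendsto_sum {ρ c : ℕ → ℝ} {s : Finset ℕ} (hρ : Set.InjOn ρ s)
    (h : Tendsto (fun k => ∑ l ∈ s, c l * ρ l ^ k) atTop (𝓝 0)) :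
    ∀ l ∈ s, Tendsto (fun k => c l * ρ l ^ k) atTop (𝓝 0) := by
  induction s using Finset.induction_on generalizing c with
  | empty => simp
  | insert n s hn ih =>
    rw [coe_insert] at hρ
    have hne : ∀ l ∈ s, ρ l - ρ n ≠ 0 := fun l hl =>
      sub_ne_zero.2 fun e => hn (hρ (Set.mem_insert_of_mem _ hl) (Set.mem_insert _ _) e ▸ hl)
    -- applying the shift minus `ρ n` kills the `n`-th geometric sequence
    have hs : Tendsto (fun k => ∑ l ∈ s, c l * (ρ l - ρ n) * ρ l ^ k) atTop (𝓝 0) := by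
      have := (h.comp (tendsto_add_atTop_nat 1)).sub (h.const_mul (ρ n))
      rw [mul_zero, sub_zero] at this
      refine this.congr fun k => ?_
      rw [Function.comp_apply, sum_insert hn, sum_insert hn, mul_add, mul_sum, add_sub_add_comm,
        ← sum_sub_distrib, show c n * ρ n ^ (k + 1) - ρ n * (c n * ρ n ^ k) = 0 by ring, zero_add]
      exact sum_congr rfl fun l _ => by ring
    have hs' : ∀ l ∈ s, Tendsto (fun k => c l * ρ l ^ k) atTop (𝓝 0) := fun l hl => by
      have := (ih (hρ.mono (Set.subset_insert _ _)) hs l hl).const_mul (ρ l - ρ n)⁻¹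
      rw [mul_zero] at this
      refine this.congr fun k => ?_
      field_simp [hne l hl]
    intro l hl
    rcases mem_insert.1 hl with rfl | hl
    · have := h.sub (tendsto_finsetSum s hs')
      rw [sum_const_zero, sub_zero] at this
      exact this.congr fun k => by rw [sum_insert hn, add_sub_cancel_right]
    · exact hs' l hl

lemma summable_mul_pow_of_tendsto {c ρ : ℝ} (h : Tendsto (fun k => c * ρ ^ k) atTop (𝓝 0)) :
    Summable fun k => c * ρ ^ k := by
  rcases eq_or_ne c 0 with rfl | hc
  · simp
  have hρ : Tendsto (fun k => ρ ^ k) atTop (𝓝 0) := by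
    simpa [hc] using h.const_mul c⁻¹
  exact (summable_geometric_of_norm_lt_one
    (by simpa using tendsto_pow_atTop_nhds_zero_iff.1 hρ)).mul_left c

lemma exists_sum_mul_pow_of_recurrence {ρ c u : ℕ → ℝ} {s : Finset ℕ} {n : ℕ} (hn : n ∉ s)
    (hρ : ∀ l ∈ s, ρ l ≠ ρ n) (h : ∀ k, u (k + 1) = ρ n * u k + ∑ l ∈ s, c l * ρ l ^ k) :
    ∃ d : ℕ → ℝ, ∀ k, u k = ∑ l ∈ insert n s, d l * ρ l ^ k := by
  set d : ℕ → ℝ := fun l => c l / (ρ l - ρ n)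
  have hu : ∀ k, u k = (u 0 - ∑ l ∈ s, d l) * ρ n ^ k + ∑ l ∈ s, d l * ρ l ^ k := by
    intro k
    induction k with
    | zero => simp
    | succ k ih =>
      have hd : ∀ l ∈ s, d l * ρ l ^ (k + 1) = ρ n * (d l * ρ l ^ k) + c l * ρ l ^ k := by
        intro l hl
        have := sub_ne_zero.2 (hρ l hl)
        simp only [d]
        field_simp
        ring
      rw [h k, ih, sum_congr rfl hd, sum_add_distrib, ← mul_sum]
      ring
  refine ⟨Function.update d n (u 0 - ∑ l ∈ s, d l), fun k => ?_⟩
  rw [sum_insert hn, Function.update_self, hu k]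
  congr 1
  exact sum_congr rfl fun l hl => by rw [Function.update_of_ne (ne_of_mem_of_not_mem hl hn)]

section ConstantCoefficients

variable {b r t : ℝ}

lemma injective_natCast_mul_add_div (hb : b ≠ 0) (ht : t ≠ 0) :
    Function.Injective fun l : ℕ => ((l : ℝ) * b + r) / t := fun l l' h => by
  simpa [div_left_inj' ht, hb] using h

lemma qgen_zero_eq_sum_mul_pow (ht : t ≠ 0) (hb : b ≠ 0) (m : ℕ) :
    ∃ d : ℕ → ℝ, ∀ k,
      qgen 0 b r t k m = ∑ l ∈ range (m + 1), d l * (((l : ℝ) * b + r) / t) ^ k := by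
  have ht' : ∀ k : ℕ, t ≠ k * 0 := by simpa using ht
  have hρ := injective_natCast_mul_add_div (r := r) hb ht
  induction m with
  | zero =>
    rw [range_one, ← insert_empty]
    refine exists_sum_mul_pow_of_recurrence (c := 0) (notMem_empty 0) (by simp) fun k => ?_
    simp [qgen_succ_zero ht']
  | succ m ih =>
    obtain ⟨d, hd⟩ := ih
    rw [range_add_one]
    refine exists_sum_mul_pow_of_recurrence (c := fun l => (t - r - m * b) / t * d l)
      notMem_range_self (fun l hl => hρ.ne (ne_of_mem_of_not_mem hl notMem_range_self))
      fun k => ?_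
    rw [qgen_succ_succ ht', hd k, mul_sum]
    simp only [mul_zero, sub_zero, mul_assoc]
    push_cast
    ring

lemma summable_qgen_zero_of_tendsto (ht : t ≠ 0) (hb : b ≠ 0) {m : ℕ}
    (h : Tendsto (fun k => qgen 0 b r t k m) atTop (𝓝 0)) :
    Summable fun k => qgen 0 b r t k m := by
  have hρ := injective_natCast_mul_add_div (r := r) hb ht
  obtain ⟨d, hd⟩ := qgen_zero_eq_sum_mul_pow (r := r) ht hb m
  simp only [hd] at h ⊢
  exact summable_sum fun l hl =>
    summable_mul_pow_of_tendsto (tendsto_mul_pow_of_tendsto_sum hρ.injOn h l hl)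

lemma qgen_zero_zero (ht : t ≠ 0) (k m : ℕ) :
    qgen 0 0 r t k m = k.choose m * ((t - r) / t) ^ m * (r / t) ^ (k - m) := by
  have ht' : ∀ k : ℕ, t ≠ k * 0 := by simpa using ht
  induction k generalizing m with
  | zero => cases m <;> simp [qgen_zero_left]
  | succ k ih =>
    cases m with
    | zero => simp [qgen_succ_zero ht', ih, pow_succ, mul_comm]
    | succ m =>
      rw [qgen_succ_succ ht', ih, ih, Nat.choose_succ_succ', Nat.succ_sub_succ]
      simp only [mul_zero, sub_zero, zero_add, Nat.cast_add]
      rcases Nat.lt_or_ge k (m + 1) with hk | hk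
      · rw [Nat.choose_eq_zero_of_lt hk]
        push_cast
        ring
      · rw [show k - m = k - (m + 1) + 1 by omega]
        ring

lemma summable_qgen_zero_zero_of_tendsto (ht : t ≠ 0) (htr : t ≠ r) {m : ℕ}
    (h : Tendsto (fun k => qgen 0 0 r t k m) atTop (𝓝 0)) :
    Summable fun k => qgen 0 0 r t k m := by
  have hγ : ((t - r) / t) ^ m ≠ 0 := pow_ne_zero m (div_ne_zero (sub_ne_zero.2 htr) ht)
  have hq : ∀ n, qgen 0 0 r t (n + m) m =
      ((t - r) / t) ^ m * ((n + m).choose m * (r / t) ^ n) := fun n => by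
    rw [qgen_zero_zero ht, Nat.add_sub_cancel]
    ring
  have hpow : Tendsto (fun n => |r / t| ^ n) atTop (𝓝 0) := by
    have := ((tendsto_add_atTop_iff_nat m).2 h).abs.div_const |((t - r) / t) ^ m|
    rw [abs_zero, zero_div] at this
    refine squeeze_zero (fun n => by positivity) (fun n => ?_) this
    rw [hq, abs_mul, mul_div_cancel_left₀ _ (abs_ne_zero.2 hγ), abs_mul, abs_pow]
    refine le_mul_of_one_le_left (by positivity) ?_
    rw [Nat.abs_cast]
    exact_mod_cast Nat.choose_pos (Nat.le_add_left m n)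
  rw [← summable_nat_add_iff m]
  simp only [hq]
  exact (summable_choose_mul_geometric_of_norm_lt_one m (r := r / t)
    (by simpa [abs_div] using tendsto_pow_atTop_nhds_zero_iff.1 hpow)).mul_left _

end ConstantCoefficients

lemma summable_qgen_term {a b r t : ℝ} (ht : ∀ k : ℕ, t ≠ k * a) {j : ℕ} {L : ℝ}
    (hL : Tendsto (fun i => qgenUpTo a b r t i j) atTop (𝓝 L)) :
    Summable fun k : ℕ => (t - r - j * b) / (t - k * a) * qgen a b r t k j := by
  have hQ : ∀ k : ℕ, (t - r - j * b) / (t - k * a) * qgen a b r t k j =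
      qgenUpTo a b r t k j - qgenUpTo a b r t (k + 1) j := fun k => by
    rw [qgenUpTo_succ ht]; ring
  rcases eq_or_ne (t - r - j * b) 0 with hc | hc
  · simp [hc]
  rcases ne_or_eq a 0 with ha | rfl
  · refine ((eventuallyOneSigned_div_sub_nat_mul ha _ t).mul
      (eventuallyOneSigned_qgen ha ht j)).summable (S := qgenUpTo a b r t 0 j - L) ?_
    exact (tendsto_const_nhds.sub hL).congr fun n => by simp only [hQ, sum_range_sub']
  have ht0 : t ≠ 0 := by simpa using ht 0
  have hq : Tendsto (fun k => qgen 0 b r t k j) atTop (𝓝 0) := by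
    have := (hL.sub ((tendsto_add_atTop_iff_nat 1).2 hL)).const_mul (t / (t - r - j * b))
    rw [sub_self, mul_zero] at this
    refine this.congr fun k => ?_
    rw [← hQ, mul_zero, sub_zero]
    field_simp
  have hsum : Summable fun k => qgen 0 b r t k j := by
    rcases ne_or_eq b 0 with hb | rfl
    · exact summable_qgen_zero_of_tendsto ht0 hb hq
    · exact summable_qgen_zero_zero_of_tendsto ht0 (by simpa [sub_eq_zero] using hc) hq
  simpa using hsum.mul_left ((t - r - j * b) / t)

/-- let `a,b,r,t ∈ ℝ` with `t ∉ {0,a,2a,…}`.  Fix `j` and suppose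
`L = lim_{k→∞} q_{k,≤j}` exists, where `q_{i,≤j} := ∑_{m=0}^{j} q_{im}`.  Then for every
`i ≥ 0` the series `∑_{k=i}^{∞} ((t-r-jb)/(t-ka)) q_{kj}` converges with sum
`q_{i,≤j} - L` (the series over `k ≥ i` being indexed by `k = m + i`, `m : ℕ`). -/
theorem statement9 (a b r t : ℝ) (ht : ∀ k : ℕ, t ≠ k * a) (j : ℕ) (L : ℝ)
    (hL : Filter.Tendsto (fun i : ℕ => ∑ m ∈ Finset.range (j + 1), qgen a b r t i m)
      Filter.atTop (nhds L)) :
    ∀ i : ℕ, HasSum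
      (fun m : ℕ => (t - r - j * b) / (t - (m + i) * a) * qgen a b r t (m + i) j)
      ((∑ m ∈ Finset.range (j + 1), qgen a b r t i m) - L) := by
  intro i
  have := hasSum_of_eq_sub_succ (Q := fun k => qgenUpTo a b r t (k + i) j)
    ((summable_nat_add_iff i).2 (summable_qgen_term ht hL))
    (fun k => by rw [add_right_comm, qgenUpTo_succ ht]; ring) ((tendsto_add_atTop_iff_nat i).2 hL)
  simpa [qgenUpTo] using this
end

section
/- Let α ∈ ℝ. For integers i ≥ j ≥ 1 define T(i,j) := (i!/j!) · Σ_{i_1,…,i_j ≥ 1, i_1+⋯+i_j = i} Π_{l=1}^{j} [α+1]_{i_l − 1} / i_l!, where [y]_m := y(y+1)⋯(y+m−1); set T(0,0) := 1 and T(i,j) := 0 if j > i or (j = 0 and i ≥ 1). Then T(i,j) = S_α(i,j) for all i, j ≥ 0, where S_α(i,j) := S(i,j;−1,α,0) are the generalized Stirling numbers defined by S_α(0,0) = 1, S_α(i,j) = 0 for j < 0 or j > i, and S_α(i+1,j) = S_α(i,j−1) + (i + αj)·S_α(i,j). -/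
/-- the rising factorial `[y]_m := y (y+1) ⋯ (y+m-1)`. -/
noncomputable def risingFac (y : ℝ) (m : ℕ) : ℝ := ∏ k ∈ Finset.range m, (y + k)

/-- `T(i,j) := (i!/j!) ∑_{i_1+⋯+i_j = i, i_l ≥ 1} ∏_l [α+1]_{i_l - 1}/i_l!`, the sum running
over compositions of `i` into `j` positive parts.  This single formula also realizes the
boundary values: `T(0,0) = 1` and `T(i,j) = 0` if `j > i` or (`j = 0` and `i ≥ 1`), since
in those cases the index set is empty (and for `i = j = 0` it is the single empty tuple). -/
noncomputable def Tcomb (α : ℝ) (i j : ℕ) : ℝ :=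
  (Nat.factorial i : ℝ) / (Nat.factorial j) *
    ∑ c ∈ (Finset.Nat.antidiagonalTuple j i).filter fun c => ∀ l, 1 ≤ c l,
      ∏ l, risingFac (α + 1) (c l - 1) / (Nat.factorial (c l))

open Finset

def compositionTuples (j n : ℕ) : Finset (Fin j → ℕ) :=
  (Nat.antidiagonalTuple j n).filter fun c => ∀ l, 1 ≤ c l

lemma mem_compositionTuples {j n : ℕ} {c : Fin j → ℕ} :
    c ∈ compositionTuples j n ↔ ∑ l, c l = n ∧ ∀ l, 1 ≤ c l := by
  rw [compositionTuples, mem_filter, Nat.mem_antidiagonalTuple]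

lemma sum_update_add_self {k : ℕ} (c : Fin k → ℕ) (l : Fin k) (v : ℕ) :
    ∑ x, Function.update c l v x + c l = ∑ x, c x + v := by
  rw [sum_update_of_mem (mem_univ l), sum_eq_add_sum_sdiff_singleton_of_mem (mem_univ l) c]
  ring

section Bijections

variable {M : Type*} [AddCommMonoid M] {j n : ℕ}

lemma sum_compositionTuples_filter_eq_one (l : Fin (j + 1)) (f : (Fin (j + 1) → ℕ) → M) :
    ∑ c ∈ (compositionTuples (j + 1) (n + 1)).filter (fun c => c l = 1), f c =
      ∑ c ∈ compositionTuples j n, f (Fin.insertNth l 1 c) := by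
  symm
  refine sum_nbij' (fun c : Fin j → ℕ => (Fin.insertNth l 1 c : Fin (j + 1) → ℕ))
    (Fin.removeNth l) ?_ ?_ ?_ ?_ fun _ _ => by rfl
  · intro c hc
    obtain ⟨hsum, hpos⟩ := mem_compositionTuples.1 hc
    refine mem_filter.2 ⟨mem_compositionTuples.2 ⟨?_, ?_⟩, by simp⟩
    · rw [Fin.sum_insertNth, hsum, add_comm]
    · exact (Fin.forall_iff_succAbove l).2 ⟨by simp, by simpa using hpos⟩
  · intro c hc
    obtain ⟨hc, hl⟩ := mem_filter.1 hc
    obtain ⟨hsum, hpos⟩ := mem_compositionTuples.1 hc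
    refine mem_compositionTuples.2 ⟨?_, fun x => hpos _⟩
    have := Fin.add_sum_removeNth l c
    omega
  · intro c _
    simp
  · intro c hc
    simp [(mem_filter.1 hc).2]

lemma sum_compositionTuples_filter_ne_one (l : Fin (j + 1)) (f : (Fin (j + 1) → ℕ) → M) :
    ∑ c ∈ (compositionTuples (j + 1) (n + 1)).filter (fun c => ¬c l = 1), f c =
      ∑ c ∈ compositionTuples (j + 1) n, f (Function.update c l (c l + 1)) := by
  symm
  refine sum_nbij' (fun c => Function.update c l (c l + 1)) (fun c => Function.update c l (c l - 1))
    ?_ ?_ ?_ ?_ fun _ _ => by rfl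
  · intro c hc
    obtain ⟨hsum, hpos⟩ := mem_compositionTuples.1 hc
    refine mem_filter.2 ⟨mem_compositionTuples.2 ⟨?_, fun x => ?_⟩, ?_⟩
    · have := sum_update_add_self c l (c l + 1)
      omega
    · rcases eq_or_ne x l with rfl | hx
      · simp
      · simpa [Function.update_of_ne hx] using hpos x
    · have := hpos l
      rw [Function.update_self]
      omega
  · intro c hc
    obtain ⟨hc, hl⟩ := mem_filter.1 hc
    obtain ⟨hsum, hpos⟩ := mem_compositionTuples.1 hc
    have hl2 : 2 ≤ c l := by have := hpos l; omega
    refine mem_compositionTuples.2 ⟨?_, fun x => ?_⟩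
    · have := sum_update_add_self c l (c l - 1)
      omega
    · rcases eq_or_ne x l with rfl | hx
      · rw [Function.update_self]; omega
      · simpa [Function.update_of_ne hx] using hpos x
  · intro c _
    simp
  · intro c hc
    have := (mem_compositionTuples.1 (mem_filter.1 hc).1).2 l
    ext x
    rcases eq_or_ne x l with rfl | hx
    · simp only [Function.update_self]; omega
    · simp [Function.update_of_ne hx]

end Bijections

noncomputable def stirlingWeight (α : ℝ) (m : ℕ) : ℝ :=
  risingFac (α + 1) (m - 1) / m.factorial

lemma stirlingWeight_one (α : ℝ) : stirlingWeight α 1 = 1 := by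
  simp [stirlingWeight, risingFac]

lemma succ_mul_stirlingWeight_succ (α : ℝ) {m : ℕ} (hm : 1 ≤ m) :
    ((m + 1 : ℕ) : ℝ) * stirlingWeight α (m + 1) = (α + m) * stirlingWeight α m := by
  obtain ⟨k, rfl⟩ := Nat.exists_eq_add_of_le' hm
  simp only [stirlingWeight, risingFac, Nat.add_sub_cancel, prod_range_succ, Nat.factorial_succ]
  push_cast
  field_simp
  ring

lemma succ_mul_prod_stirlingWeight_update {k : ℕ} (α : ℝ) (c : Fin k → ℕ) (l : Fin k)
    (hl : 1 ≤ c l) :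
    ((c l + 1 : ℕ) : ℝ) * ∏ x, stirlingWeight α (Function.update c l (c l + 1) x) =
      (α + c l) * ∏ x, stirlingWeight α (c x) := by
  rw [Fintype.prod_eq_mul_prod_compl l, Fintype.prod_eq_mul_prod_compl l, Function.update_self,
    ← mul_assoc, succ_mul_stirlingWeight_succ α hl, mul_assoc]
  congr 2
  refine prod_congr rfl fun x hx => ?_
  rw [Function.update_of_ne (by simpa using hx)]

noncomputable def compositionSum (α : ℝ) (j n : ℕ) : ℝ :=
  ∑ c ∈ compositionTuples j n, ∏ l, stirlingWeight α (c l)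

lemma sum_compositionTuples_mul_prod_stirlingWeight (α : ℝ) (j n : ℕ) (l : Fin (j + 1)) :
    ∑ c ∈ compositionTuples (j + 1) (n + 1), (c l : ℝ) * ∏ x, stirlingWeight α (c x) =
      compositionSum α j n +
        ∑ c ∈ compositionTuples (j + 1) n, (α + c l) * ∏ x, stirlingWeight α (c x) := by
  rw [← sum_filter_add_sum_filter_not _ (fun c => c l = 1), sum_compositionTuples_filter_eq_one,
    sum_compositionTuples_filter_ne_one]
  congr 1
  · refine sum_congr rfl fun c _ => ?_
    rw [Fin.prod_univ_succAbove _ l]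
    simp [stirlingWeight_one]
  · refine sum_congr rfl fun c hc => ?_
    rw [Function.update_self]
    exact succ_mul_prod_stirlingWeight_update α c l ((mem_compositionTuples.1 hc).2 l)

lemma compositionSum_succ_succ (α : ℝ) (j n : ℕ) :
    ((n : ℝ) + 1) * compositionSum α (j + 1) (n + 1) =
      ((j : ℝ) + 1) * compositionSum α j n +
        (((j : ℝ) + 1) * α + n) * compositionSum α (j + 1) n := by
  calc ((n : ℝ) + 1) * compositionSum α (j + 1) (n + 1)
      = ∑ l, ∑ c ∈ compositionTuples (j + 1) (n + 1),
          (c l : ℝ) * ∏ x, stirlingWeight α (c x) := by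
        rw [compositionSum, mul_sum, sum_comm]
        refine sum_congr rfl fun c hc => ?_
        rw [← sum_mul, ← Nat.cast_sum, (mem_compositionTuples.1 hc).1, Nat.cast_succ]
    _ = ∑ l : Fin (j + 1), (compositionSum α j n +
          ∑ c ∈ compositionTuples (j + 1) n, (α + c l) * ∏ x, stirlingWeight α (c x)) := by
        simp only [sum_compositionTuples_mul_prod_stirlingWeight]
    _ = ((j : ℝ) + 1) * compositionSum α j n +
          ∑ c ∈ compositionTuples (j + 1) n,
            (∑ l, (α + c l)) * ∏ x, stirlingWeight α (c x) := by
        rw [sum_add_distrib, sum_const, card_univ, Fintype.card_fin, nsmul_eq_mul, sum_comm]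
        simp only [sum_mul, Nat.cast_add, Nat.cast_one]
    _ = _ := by
        congr 1
        rw [compositionSum, mul_sum]
        refine sum_congr rfl fun c hc => ?_
        rw [sum_add_distrib, ← Nat.cast_sum, (mem_compositionTuples.1 hc).1]
        simp

lemma Tcomb_eq_mul_compositionSum (α : ℝ) (i j : ℕ) :
    Tcomb α i j = (i.factorial : ℝ) / j.factorial * compositionSum α j i := rfl

lemma Tcomb_succ_succ (α : ℝ) (i j : ℕ) :
    Tcomb α (i + 1) (j + 1) = Tcomb α i j + (((j : ℝ) + 1) * α + i) * Tcomb α i (j + 1) := by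
  have hrec := compositionSum_succ_succ α j i
  have hi : (i.factorial : ℝ) ≠ 0 := by positivity
  have hj : (j.factorial : ℝ) ≠ 0 := by positivity
  simp only [Tcomb_eq_mul_compositionSum, Nat.factorial_succ, Nat.cast_mul]
  field_simp
  push_cast
  exact hrec

lemma Tcomb_zero_succ (α : ℝ) (j : ℕ) : Tcomb α 0 (j + 1) = 0 := by
  simp [Tcomb, Nat.antidiagonalTuple_zero_right, filter_singleton]

lemma Tcomb_succ_zero (α : ℝ) (i : ℕ) : Tcomb α (i + 1) 0 = 0 := by
  simp [Tcomb]

/-- `T(i,j) = S_α(i,j) := S(i,j; -1, α, 0)` for all `i, j ≥ 0`, the latter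
satisfying `S_α(0,0) = 1`, `S_α(i,j) = 0` for `j > i`, and
`S_α(i+1,j) = S_α(i,j-1) + (i + αj) S_α(i,j)`. -/
theorem statement11 (α : ℝ) : ∀ i j : ℕ, Tcomb α i j = gstir (-1) α 0 i j := by
  intro i
  induction i with
  | zero =>
    rintro (_ | j)
    · simp [Tcomb, gstir]
    · rw [Tcomb_zero_succ, gstir]
  | succ i ih =>
    rintro (_ | j)
    · rw [Tcomb_succ_zero, gstir, ← ih 0]
      cases i with
      | zero => simp
      | succ k => rw [Tcomb_succ_zero, mul_zero]
    · rw [Tcomb_succ_succ, gstir, ← ih j, ← ih (j + 1)]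
      ring
end

section
/- Let 0 ≤ α < 1. For integers i ≥ j ≥ 1 define s_α(i,j) := (i!/j!) · Σ_{i_1,…,i_j ≥ 1, i_1+⋯+i_j = i} Π_{l=1}^{j} Γ(i_l − α) / i_l!; set s_α(0,0) := 1 and s_α(i,j) := 0 if j > i or (j = 0 and i ≥ 1). Then for all integers i ≥ 0 and j ≥ 1 the recursion s_α(i+1,j) = Γ(1−α)·s_α(i,j−1) + (i − αj)·s_α(i,j) holds. Equivalently, s_α(i,j)/(Γ(1−α))^j equals the generalized Stirling number S(i,j;−1,−α,0). -/
/-- `s_α(i,j) := (i!/j!) ∑_{i_1+⋯+i_j = i, i_l ≥ 1} ∏_l Γ(i_l - α)/i_l!`, the sum running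
over compositions of `i` into `j` positive parts.  This single formula also realizes the
boundary values `s_α(0,0) = 1` and `s_α(i,j) = 0` if `j > i` or (`j = 0` and `i ≥ 1`). -/
noncomputable def sAlphaComb (α : ℝ) (i j : ℕ) : ℝ :=
  (Nat.factorial i : ℝ) / (Nat.factorial j) *
    ∑ c ∈ (Finset.Nat.antidiagonalTuple j i).filter fun c => ∀ l, 1 ≤ c l,
      ∏ l, Real.Gamma ((c l : ℝ) - α) / (Nat.factorial (c l))


/-!
With `G(x) = ∑_{n ≥ 1} Γ(n - α)/n! xⁿ`, the inner sum defining `s_α(i,j)` is the coefficient of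
`xⁱ` in `G(x)ʲ`. The functional equation `Γ(n + 1 - α) = (n - α) Γ(n - α)` says that `G` solves
`(1 - x) G' = Γ(1 - α) - α G`, hence `(1 - x) (G^{j+1})' = (j + 1) Gʲ (Γ(1 - α) - α G)`.
Comparing coefficients of `xⁱ` gives the recursion, and dividing it by `Γ(1 - α)^{j+1}` turns it
into the recursion defining `S(i,j; -1,-α,0)`.
-/

open PowerSeries Finset

theorem PowerSeries.coeff_one_sub_X_mul_derivative {R : Type*} [CommRing R] (f : R⟦X⟧) (n : ℕ) :
    coeff n ((1 - X) * d⁄dX R f) = (n + 1) * coeff (n + 1) f - n * coeff n f := by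
  rw [sub_mul, one_mul, map_sub, coeff_derivative]
  cases n with
  | zero => simp
  | succ n => rw [coeff_succ_X_mul, coeff_derivative]; push_cast; ring

theorem PowerSeries.coeff_pow_eq_sum_antidiagonalTuple {R : Type*} [CommSemiring R]
    (φ : R⟦X⟧) (k n : ℕ) :
    coeff n (φ ^ k) = ∑ c ∈ Nat.antidiagonalTuple k n, ∏ l, coeff (c l) φ := by
  rw [← Fin.prod_const, coeff_prod, finsuppAntidiag, sum_map,
    ← piAntidiag_univ_fin_eq_antidiagonalTuple]
  exact sum_attach (piAntidiag univ n) fun c => ∏ l, coeff (c l) φ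

theorem PowerSeries.coeff_pow_eq_sum_compositions {R : Type*} [CommSemiring R]
    {φ : R⟦X⟧} (hφ : constantCoeff φ = 0) (k n : ℕ) :
    coeff n (φ ^ k) =
      ∑ c ∈ (Nat.antidiagonalTuple k n).filter fun c => ∀ l, 1 ≤ c l, ∏ l, coeff (c l) φ := by
  rw [coeff_pow_eq_sum_antidiagonalTuple, sum_filter_of_ne]
  intro c _ hc
  by_contra hpos
  obtain ⟨l, hl⟩ := not_forall.mp hpos
  exact hc (prod_eq_zero (mem_univ l) (by simpa [Nat.lt_one_iff.mp (not_le.mp hl)] using hφ))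

noncomputable def gammaSeries (α : ℝ) : ℝ⟦X⟧ :=
  mk fun n => if n = 0 then 0 else Real.Gamma ((n : ℝ) - α) / (Nat.factorial n)

theorem constantCoeff_gammaSeries (α : ℝ) : constantCoeff (gammaSeries α) = 0 := by
  simp [gammaSeries, ← coeff_zero_eq_constantCoeff_apply]

theorem sAlphaComb_eq_coeff_gammaSeries_pow (α : ℝ) (i j : ℕ) :
    sAlphaComb α i j =
      (Nat.factorial i : ℝ) / (Nat.factorial j) * coeff i (gammaSeries α ^ j) := by
  rw [coeff_pow_eq_sum_compositions (constantCoeff_gammaSeries α), sAlphaComb]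
  refine congrArg _ (sum_congr rfl fun c hc => prod_congr rfl fun l _ => ?_)
  have : c l ≠ 0 := Nat.one_le_iff_ne_zero.mp ((mem_filter.mp hc).2 l)
  simp [gammaSeries, this]

theorem one_sub_X_mul_derivative_gammaSeries {α : ℝ} (hα : α < 1) :
    (1 - X) * d⁄dX ℝ (gammaSeries α) = C (Real.Gamma (1 - α)) - C α * gammaSeries α := by
  ext n
  rw [coeff_one_sub_X_mul_derivative, map_sub, coeff_C_mul, coeff_C]
  rcases n with _ | n
  · simp [gammaSeries]
  · have hpos : (0 : ℝ) < (n + 1 : ℕ) - α := by push_cast; linarith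
    have hΓ := Real.Gamma_add_one hpos.ne'
    simp only [gammaSeries, coeff_mk, Nat.succ_ne_zero, if_false, Nat.factorial_succ]
    rw [show (((n + 1 + 1 : ℕ) : ℝ) - α) = ((n + 1 : ℕ) : ℝ) - α + 1 by push_cast; ring, hΓ]
    push_cast
    field_simp
    ring

theorem coeff_gammaSeries_pow_succ_succ {α : ℝ} (hα : α < 1) (i j : ℕ) :
    (i + 1) * coeff (i + 1) (gammaSeries α ^ (j + 1)) =
      (j + 1) * Real.Gamma (1 - α) * coeff i (gammaSeries α ^ j)
        + (i - α * (j + 1)) * coeff i (gammaSeries α ^ (j + 1)) := by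
  have hode : (1 - X) * d⁄dX ℝ (gammaSeries α ^ (j + 1)) =
      C ((j + 1) * Real.Gamma (1 - α)) * gammaSeries α ^ j
        - C (α * (j + 1)) * gammaSeries α ^ (j + 1) := by
    rw [derivative_pow, Nat.add_sub_cancel, mul_left_comm,
      one_sub_X_mul_derivative_gammaSeries hα]
    simp only [map_mul, map_add, map_natCast, map_one, pow_succ]
    push_cast
    ring
  have := congrArg (coeff i) hode
  rw [coeff_one_sub_X_mul_derivative, map_sub, coeff_C_mul, coeff_C_mul] at this
  linear_combination this

theorem sAlphaComb_succ_succ {α : ℝ} (hα : α < 1) (i j : ℕ) :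
    sAlphaComb α (i + 1) (j + 1) =
      Real.Gamma (1 - α) * sAlphaComb α i j + (i - α * (j + 1)) * sAlphaComb α i (j + 1) := by
  simp only [sAlphaComb_eq_coeff_gammaSeries_pow, Nat.factorial_succ, Nat.cast_mul]
  have hj : (Nat.factorial j : ℝ) ≠ 0 := by positivity
  have hrec := coeff_gammaSeries_pow_succ_succ hα i j
  field_simp
  push_cast
  linear_combination hrec

theorem sAlphaComb_zero_zero (α : ℝ) : sAlphaComb α 0 0 = 1 := by
  simp [sAlphaComb]

theorem sAlphaComb_succ_zero (α : ℝ) (i : ℕ) : sAlphaComb α (i + 1) 0 = 0 := by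
  simp [sAlphaComb]

theorem sAlphaComb_zero_succ (α : ℝ) (j : ℕ) : sAlphaComb α 0 (j + 1) = 0 := by
  simp [sAlphaComb_eq_coeff_gammaSeries_pow, constantCoeff_gammaSeries]

theorem sAlphaComb_div_pow_eq_gstir {α : ℝ} (hα : α < 1) (i j : ℕ) :
    sAlphaComb α i j / Real.Gamma (1 - α) ^ j = gstir (-1) (-α) 0 i j := by
  have hΓ : Real.Gamma (1 - α) ≠ 0 := (Real.Gamma_pos_of_pos (by linarith)).ne'
  induction i generalizing j with
  | zero =>
    cases j with
    | zero => simp [gstir, sAlphaComb_zero_zero]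
    | succ j => simp [gstir, sAlphaComb_zero_succ]
  | succ i ih =>
    cases j with
    | zero =>
      rw [gstir, ← ih, sAlphaComb_succ_zero]
      cases i <;> simp [sAlphaComb_succ_zero]
    | succ j =>
      rw [gstir, ← ih, ← ih, sAlphaComb_succ_succ hα, pow_succ]
      field_simp
      ring

theorem statement12_general (α : ℝ) (h1 : α < 1) :
    (∀ i j : ℕ, 1 ≤ j →
      sAlphaComb α (i + 1) j =
        Real.Gamma (1 - α) * sAlphaComb α i (j - 1) + ((i : ℝ) - α * j) * sAlphaComb α i j) ∧
    (∀ i j : ℕ, sAlphaComb α i j / (Real.Gamma (1 - α)) ^ j = gstir (-1) (-α) 0 i j) := by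
  refine ⟨fun i j hj => ?_, sAlphaComb_div_pow_eq_gstir h1⟩
  obtain ⟨j, rfl⟩ := Nat.exists_eq_add_of_le' hj
  rw [sAlphaComb_succ_succ h1, Nat.add_sub_cancel]
  push_cast
  ring

/-- for `0 ≤ α < 1`, the combinatorially defined `s_α` satisfies the
recursion `s_α(i+1,j) = Γ(1-α) s_α(i,j-1) + (i - αj) s_α(i,j)` for `i ≥ 0`, `j ≥ 1`;
equivalently, `s_α(i,j)/Γ(1-α)^j` equals the generalized Stirling number
`S(i,j; -1, -α, 0)` of Hsu and Shiue. -/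
theorem statement12 (α : ℝ) (h0 : 0 ≤ α) (h1 : α < 1) :
    (∀ i j : ℕ, 1 ≤ j →
      sAlphaComb α (i + 1) j =
        Real.Gamma (1 - α) * sAlphaComb α i (j - 1) + ((i : ℝ) - α * j) * sAlphaComb α i j) ∧
    (∀ i j : ℕ, sAlphaComb α i j / (Real.Gamma (1 - α)) ^ j = gstir (-1) (-α) 0 i j) :=
  statement12_general α h1
end

section
/- For every real α with 0 < α < 2, the series Σ_{m=1}^{∞} Γ(m + 1 − α)/Γ(m + 2) converges and Σ_{m=1}^{∞} Γ(m + 1 − α)/Γ(m + 2) = Γ(2 − α)/α. -/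
/-!
With `g s = Γ(s - α) / Γ(s)`, the functional equation gives
`g s - g (s + 1) = α Γ(s - α) / Γ(s + 1)`, so the series telescopes to `g 2 / α = Γ(2 - α) / α`
once `g s → 0`. That limit follows from log-convexity of `Γ`: interpolating between `s - 2` and
`s` bounds `g s` by `((s - 2)(s - 1))^(-α/2)`.
-/

open Filter Topology Real

theorem Antitone.hasSum_sub_succ {f : ℕ → ℝ} {l : ℝ} (hf : Antitone f)
    (h : Tendsto f atTop (𝓝 l)) : HasSum (fun n ↦ f n - f (n + 1)) (f 0 - l) := by
  rw [hasSum_iff_tendsto_nat_of_nonneg fun n ↦ sub_nonneg.mpr (hf n.le_succ)]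
  simpa only [Finset.sum_range_sub'] using tendsto_const_nhds.sub h

namespace Real

theorem Gamma_sub_div_Gamma_sub_Gamma_add_one_sub_div {s a : ℝ} (hs : 0 < s) (hsa : s - a ≠ 0) :
    Gamma (s - a) / Gamma s - Gamma (s + 1 - a) / Gamma (s + 1) =
      a * (Gamma (s - a) / Gamma (s + 1)) := by
  rw [Gamma_add_one hs.ne', show s + 1 - a = s - a + 1 by ring, Gamma_add_one hsa]
  have := (Gamma_pos_of_pos hs).ne'
  field_simp
  ring

theorem Gamma_add_two_sub_le {x a : ℝ} (hx : 0 < x) (ha₀ : 0 < a) (ha₂ : a < 2) :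
    Gamma (x + 2 - a) ≤ (x * (x + 1)) ^ (-(a / 2)) * Gamma (x + 2) := by
  have hconv := Gamma_mul_add_mul_le_rpow_Gamma_mul_rpow_Gamma hx (by linarith : 0 < x + 2)
    (half_pos ha₀) (by linarith : 0 < 1 - a / 2) (by ring)
  have hΓ : Gamma (x + 2) = x * (x + 1) * Gamma x := by
    rw [show x + 2 = x + 1 + 1 by ring, Gamma_add_one (by positivity), Gamma_add_one hx.ne']
    ring
  have hx' : 0 < x * (x + 1) := by positivity
  have hΓx := Gamma_pos_of_pos hx
  calc Gamma (x + 2 - a) ≤ Gamma x ^ (a / 2) * Gamma (x + 2) ^ (1 - a / 2) := by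
        convert hconv using 2; ring
    _ = (x * (x + 1)) ^ (-(a / 2)) * Gamma (x + 2) := by
        rw [hΓ, mul_rpow hx'.le hΓx.le, rpow_neg hx'.le, rpow_sub hx', rpow_sub hΓx, rpow_one,
          rpow_one]
        field_simp

theorem tendsto_Gamma_sub_div_Gamma_atTop {a : ℝ} (ha₀ : 0 < a) (ha₂ : a < 2) :
    Tendsto (fun s ↦ Gamma (s - a) / Gamma s) atTop (𝓝 0) := by
  have hsub : Tendsto (fun s : ℝ ↦ s - 2) atTop atTop :=
    tendsto_atTop_add_const_right _ _ tendsto_id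
  have hbound : Tendsto (fun s : ℝ ↦ ((s - 2) * (s - 2 + 1)) ^ (-(a / 2))) atTop (𝓝 0) :=
    (tendsto_rpow_neg_atTop (half_pos ha₀)).comp
      (hsub.atTop_mul_atTop₀ (tendsto_atTop_add_const_right _ _ hsub))
  refine tendsto_of_tendsto_of_tendsto_of_le_of_le' tendsto_const_nhds hbound ?_ ?_
  · filter_upwards [eventually_gt_atTop a] with s hs
    exact div_nonneg (Gamma_pos_of_pos (by linarith)).le (Gamma_pos_of_pos (by linarith)).le
  · filter_upwards [eventually_gt_atTop 2] with s hs
    have := Gamma_add_two_sub_le (sub_pos.mpr hs) ha₀ ha₂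
    rw [sub_add_cancel] at this
    rwa [div_le_iff₀ (Gamma_pos_of_pos (by linarith))]

end Real

/-- for `0 < α < 2`, the series `∑_{m=1}^{∞} Γ(m+1-α)/Γ(m+2)` converges with
sum `Γ(2-α)/α` (the series being indexed by `m = k + 1`, `k : ℕ`). -/
theorem statement18 (α : ℝ) (h0 : 0 < α) (h2 : α < 2) :
    HasSum (fun k : ℕ => Real.Gamma ((k : ℝ) + 2 - α) / Real.Gamma ((k : ℝ) + 3))
      (Real.Gamma (2 - α) / α) := by
  set g : ℕ → ℝ := fun k ↦ Gamma ((k : ℝ) + 2 - α) / Gamma ((k : ℝ) + 2) with hg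
  have hstep (k : ℕ) :
      g k - g (k + 1) = α * (Gamma ((k : ℝ) + 2 - α) / Gamma ((k : ℝ) + 3)) := by
    have := Gamma_sub_div_Gamma_sub_Gamma_add_one_sub_div (s := (k : ℝ) + 2) (a := α)
      (by positivity) (by linarith [k.cast_nonneg (α := ℝ)])
    simp only [hg, Nat.cast_succ]
    convert this using 3 <;> congr 1 <;> ring
  have hanti : Antitone g := antitone_nat_of_succ_le fun k ↦ by
    have := Gamma_pos_of_pos (by linarith [k.cast_nonneg (α := ℝ)] : (0 : ℝ) < k + 2 - α)
    exact sub_nonneg.mp (hstep k ▸ by positivity)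
  have hlim : Tendsto g atTop (𝓝 0) :=
    (tendsto_Gamma_sub_div_Gamma_atTop h0 h2).comp
      (tendsto_atTop_add_const_right _ 2 tendsto_natCast_atTop_atTop)
  have hsum := hanti.hasSum_sub_succ hlim
  simp only [hstep, sub_zero] at hsum
  rw [← hasSum_mul_left_iff h0.ne', mul_div_cancel₀ _ h0.ne']
  simpa [hg] using hsum
end
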